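/- arXiv:1905.07773 — 5 statements merged into one kernel-verified Lean document; each statement's English description precedes it below -/
import Mathlib

section
/- (Lemma 3.1, converse direction) Let q be a nonnegative real-valued function on the triples ⋃_{k=0}^{L−1} X_k×A×X_{k+1} of an episodic loop-free MDP such that q(x,a) > 0 for every x ∈ X_k (k ≤ L−1) and a ∈ A, and such that: (1) for every 0 ≤ k ≤ L−1, Σ_{x∈X_k} Σ_{a∈A} Σ_{x'∈X_{k+1}} q(x,a,x') = 1; (2) for every 1 ≤ k ≤ L−1 and x ∈ X_k, Σ_{a∈A} Σ_{x'∈X_{k+1}} q(x,a,x') = Σ_{x'∈X_{k−1}} Σ_{a∈A} q(x',a,x). Define the induced transition function P^q(x'|x,a) = q(x,a,x')/q(x,a) and induced policy π^q(a|x) = q(x,a)/Σ_{b∈A} q(x,b). Then q is the occupancy measure of P^q and π^q, i.e., q = q^{P^q,π^q}. -/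
open Finset

/-- An episodic loop-free MDP: layers `X 0, …, X L` (encoded as an `ℕ`-indexed family of
types, so distinct layers are automatically disjoint), with `X 0` and `X L` singletons,
and a finite nonempty action set `A`. -/
structure LoopFreeMDP where
  L : ℕ
  hL : 1 ≤ L
  X : ℕ → Type
  instFintypeX : ∀ k, Fintype (X k)
  instDecEqX : ∀ k, DecidableEq (X k)
  nonemptyX : ∀ k, k ≤ L → Nonempty (X k)
  x0 : X 0
  hX0 : ∀ y : X 0, y = x0
  xL : X L
  hXL : ∀ y : X L, y = xL
  A : Type
  instFintypeA : Fintype A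
  instDecEqA : DecidableEq A
  instNonemptyA : Nonempty A

attribute [instance] LoopFreeMDP.instFintypeX LoopFreeMDP.instDecEqX
  LoopFreeMDP.instFintypeA LoopFreeMDP.instDecEqA LoopFreeMDP.instNonemptyA

namespace LoopFreeMDP

/-- The type of candidate transition functions. -/
abbrev TransKer (M : LoopFreeMDP) := ∀ k, M.X k → M.A → M.X (k + 1) → ℝ

/-- The type of candidate policies. -/
abbrev PolicyKer (M : LoopFreeMDP) := ∀ k, M.X k → M.A → ℝ

/-- `P` is a transition function: for every layer `k < L`, state and action,
`P (·|x,a)` is a probability vector on `X (k+1)`. -/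
def IsTransition (M : LoopFreeMDP) (P : M.TransKer) : Prop :=
  ∀ k, k < M.L → ∀ (x : M.X k) (a : M.A),
    (∀ x', 0 ≤ P k x a x') ∧ (∑ x', P k x a x' = 1)

/-- `π` is a policy: for every layer `k < L` and state, `π (·|x)` is a probability
vector on `A`. -/
def IsPolicy (M : LoopFreeMDP) (π : M.PolicyKer) : Prop :=
  ∀ k, k < M.L → ∀ x : M.X k,
    (∀ a, 0 ≤ π k x a) ∧ (∑ a, π k x a = 1)

/-- The state-visitation probabilities `μ_k`, defined layer by layer. -/
def mu (M : LoopFreeMDP) (P : M.TransKer) (π : M.PolicyKer) : ∀ k, M.X k → ℝ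
  | 0, _ => 1
  | k + 1, x' => ∑ x : M.X k, ∑ a : M.A, M.mu P π k x * π k x a * P k x a x'

/-- The occupancy measure `q^{P,π}(x,a,x') = μ_k(x)·π(a|x)·P(x'|x,a)`. -/
def occ (M : LoopFreeMDP) (P : M.TransKer) (π : M.PolicyKer)
    (k : ℕ) (x : M.X k) (a : M.A) (x' : M.X (k + 1)) : ℝ :=
  M.mu P π k x * π k x a * P k x a x'

end LoopFreeMDP

/-- **Lemma 3.1 (converse direction).** If a nonnegative function `q` on the triples has
strictly positive state-action marginals, each layer-block sums to `1`, and the flow condition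
holds, then `q` is the occupancy measure of its induced transition function `P^q` and induced
policy `π^q`. -/
theorem occupancy_converse (M : LoopFreeMDP)
    (q : ∀ k, M.X k → M.A → M.X (k + 1) → ℝ)
    (hnn : ∀ k, k < M.L → ∀ (x : M.X k) (a : M.A) (x' : M.X (k + 1)), 0 ≤ q k x a x')
    (hpos : ∀ k, k < M.L → ∀ (x : M.X k) (a : M.A), 0 < ∑ x' : M.X (k + 1), q k x a x')
    (h1 : ∀ k < M.L, ∑ x : M.X k, ∑ a : M.A, ∑ x' : M.X (k + 1), q k x a x' = 1)
    (h2 : ∀ k, k + 1 < M.L → ∀ x : M.X (k + 1),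
      ∑ a : M.A, ∑ x'' : M.X (k + 2), q (k + 1) x a x''
        = ∑ x' : M.X k, ∑ a : M.A, q k x' a x) :
    ∀ k, k < M.L → ∀ (x : M.X k) (a : M.A) (x' : M.X (k + 1)),
      q k x a x' =
        M.occ
          (fun k x a x' => q k x a x' / ∑ y : M.X (k + 1), q k x a y)
          (fun k x a =>
            (∑ x' : M.X (k + 1), q k x a x')
              / ∑ b : M.A, ∑ x' : M.X (k + 1), q k x b x')
          k x a x' := by
  set P : M.TransKer := fun k x a x' => q k x a x' / ∑ y : M.X (k + 1), q k x a y with hP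
  set π : M.PolicyKer := fun k x a =>
      (∑ x' : M.X (k + 1), q k x a x') / ∑ b : M.A, ∑ x' : M.X (k + 1), q k x b x' with hπ
  have hT : ∀ k, k < M.L → ∀ x : M.X k, 0 < ∑ b : M.A, ∑ x' : M.X (k + 1), q k x b x' := by
    intro k hk x
    obtain ⟨a⟩ := M.instNonemptyA
    have := hpos k hk x a
    have hnn' : ∀ b : M.A, b ∈ (Finset.univ : Finset M.A) →
        0 ≤ ∑ x' : M.X (k + 1), q k x b x' := fun b _ =>
      Finset.sum_nonneg fun x' _ => hnn k hk x b x'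
    exact Finset.sum_pos' hnn' ⟨a, Finset.mem_univ a, this⟩
  have hmu : ∀ k, k < M.L → ∀ x : M.X k,
      M.mu P π k x = ∑ a : M.A, ∑ x' : M.X (k + 1), q k x a x' := by
    intro k
    induction k with
    | zero =>
      intro hk x
      haveI : Unique (M.X 0) := ⟨⟨M.x0⟩, M.hX0⟩
      have h10 := h1 0 hk
      rw [Fintype.sum_unique] at h10
      rw [show (default : M.X 0) = M.x0 from M.hX0 default] at h10
      have hx : x = M.x0 := M.hX0 x
      subst hx
      simp only [LoopFreeMDP.mu]
      exact h10.symm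
    | succ k ih =>
      intro hk x'
      have hk' : k < M.L := Nat.lt_of_succ_lt hk
      have key : ∀ (x : M.X k) (a : M.A),
          M.mu P π k x * π k x a * P k x a x' = q k x a x' := by
        intro x a
        rw [ih hk' x, hP, hπ]
        have hs := hpos k hk' x a
        have hT' := hT k hk' x
        field_simp
      calc M.mu P π (k + 1) x'
          = ∑ x : M.X k, ∑ a : M.A, M.mu P π k x * π k x a * P k x a x' := rfl
        _ = ∑ x : M.X k, ∑ a : M.A, q k x a x' := by
            exact Finset.sum_congr rfl fun x _ => Finset.sum_congr rfl fun a _ => key x a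
        _ = ∑ a : M.A, ∑ x'' : M.X (k + 2), q (k + 1) x' a x'' := (h2 k hk x').symm
  intro k hk x a x'
  unfold LoopFreeMDP.occ
  rw [hmu k hk x]
  have hs := hpos k hk x a
  have hT' := hT k hk x
  show q k x a x' = _ * ((∑ y, q k x a y) / ∑ b, ∑ y, q k x b y) * (q k x a x' / ∑ y, q k x a y)
  field_simp
end

section
/- (Theorem 5.3, deterministic form with general η) Consider an episodic loop-free MDP with triple set J = ⋃_{k=0}^{L−1} X_k×A×X_{k+1} and let |X| = Σ_{k=0}^{L} |X_k|. Fix T ≥ 1, η > 0 and F ≥ 0. Suppose: q_1 ∈ ℝ^J is the uniform occupancy measure, q_1(x,a,x') = 1/(|X_k|·|A|·|X_{k+1}|) for (x,a,x') ∈ X_k×A×X_{k+1}; for each t = 1,…,T, z_t ∈ ℝ^J satisfies |z_t(x,a,x')| ≤ F for every triple; K_t ⊆ { q ∈ [0,1]^J : for every 0 ≤ k ≤ L−1, Σ_{(x,a,x')∈X_k×A×X_{k+1}} q(x,a,x') = 1 } is convex; and q_{t+1} ∈ K_t is componentwise strictly positive and minimizes q ↦ η⟨q, z_t⟩ + D(q‖q_t)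 over K_t. Then for every q ∈ ⋂_{t=1}^T K_t: Σ_{t=1}^T ⟨q_t − q, z_t⟩ ≤ η F² L T + (L/η)·ln(|X|²|A|/L²). -/
open Finset

namespace LoopFreeMDP

/-- Standard inner product on `ℝ^J`, where `J = ⋃_{k<L} X_k×A×X_{k+1}` is the set of triples. -/
def ip (M : LoopFreeMDP) (q w : ∀ k, M.X k → M.A → M.X (k + 1) → ℝ) : ℝ :=
  ∑ k ∈ Finset.range M.L, ∑ x : M.X k, ∑ a : M.A, ∑ x' : M.X (k + 1),
    q k x a x' * w k x a x'

/-- Unnormalized Kullback–Leibler divergence on `ℝ^J`,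
`D(q‖q') = Σ_{j∈J} (q_j·ln(q_j/q'_j) − q_j + q'_j)` (with `0·ln 0 = 0`, which holds
automatically since `Real.log 0 = 0`). -/
noncomputable def kl (M : LoopFreeMDP) (q q' : ∀ k, M.X k → M.A → M.X (k + 1) → ℝ) : ℝ :=
  ∑ k ∈ Finset.range M.L, ∑ x : M.X k, ∑ a : M.A, ∑ x' : M.X (k + 1),
    (q k x a x' * Real.log (q k x a x' / q' k x a x') - q k x a x' + q' k x a x')

/-- `|X| = Σ_{k=0}^{L} |X_k|`, the total number of states. -/
def cardX (M : LoopFreeMDP) : ℕ :=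
  ∑ k ∈ Finset.range (M.L + 1), Fintype.card (M.X k)

end LoopFreeMDP

section AuxScalar
open Real

lemma aux_exp_quad {u : ℝ} (hu : 0 ≤ u) : 1 + u + u ^ 2 / 2 ≤ Real.exp u := by
  have h := Real.sum_le_exp_of_nonneg hu 3
  simp [Finset.sum_range_succ] at h
  nlinarith [h]

lemma aux_phi_neg {u : ℝ} (hu : 0 ≤ u) : Real.exp (-u) - 1 + u ≤ u ^ 2 / 2 := by
  have h1 := aux_exp_quad hu
  have h2 : Real.exp (-u) * Real.exp u = 1 := by rw [← Real.exp_add]; simp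
  have h3 : (0:ℝ) < Real.exp u := Real.exp_pos u
  have h4 : (0:ℝ) < Real.exp (-u) := Real.exp_pos _
  nlinarith [sq_nonneg u, sq_nonneg (u*u)]

lemma aux_phi_pos {v : ℝ} (hv0 : 0 ≤ v) (hv : v ≤ 6/5) :
    Real.exp v - 1 - v ≤ (25/9) * v ^ 2 := by
  have h2 : |v/2| ≤ 1 := by rw [abs_of_nonneg (by linarith)]; linarith
  have h := Real.exp_bound h2 (n := 2) (by norm_num)
  simp [Finset.sum_range_succ] at h
  have hb : Real.exp (v/2) ≤ 1 + v/2 + (v/2)^2 := by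
    have h' := (abs_le.mp h).2
    have hq : |v/2|^2 = (v/2)^2 := sq_abs _
    nlinarith [h']
  have hs : Real.exp v = Real.exp (v/2) * Real.exp (v/2) := by
    rw [← Real.exp_add]; ring_nf
  have hp : (0:ℝ) < Real.exp (v/2) := Real.exp_pos _
  have hsq : Real.exp (v/2) * Real.exp (v/2) ≤ (1 + v/2 + (v/2)^2) * (1 + v/2 + (v/2)^2) :=
    mul_le_mul hb hb hp.le (by nlinarith)
  nlinarith [hsq, sq_nonneg v, sq_nonneg (v*v)]

lemma aux_phi_bound {u s : ℝ} (hs0 : 0 ≤ s) (hs : s ≤ 2)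
    (h1 : -(3/5) * s ≤ u) (h2 : u ≤ (7/5) * s) :
    Real.exp (-u) - 1 + u ≤ s ^ 2 := by
  rcases le_or_gt 0 u with hu | hu
  · have := aux_phi_neg hu
    nlinarith
  · have hv0 : 0 ≤ -u := by linarith
    have hv : -u ≤ 6/5 := by nlinarith
    have h3 := aux_phi_pos hv0 hv
    nlinarith [h3]

lemma aux_kl_nonneg {a b : ℝ} (ha : 0 ≤ a) (hb : 0 < b) :
    0 ≤ a * Real.log (a / b) - a + b := by
  rcases eq_or_lt_of_le ha with h | h
  · simp [← h]; linarith
  · have hlog : Real.log (b / a) ≤ b / a - 1 := Real.log_le_sub_one_of_pos (by positivity)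
    have : Real.log (b / a) = - Real.log (a / b) := by
      rw [← Real.log_inv]; congr 1; field_simp
    rw [this] at hlog
    have : a * Real.log (a / b) ≥ a * (1 - b/a) := by
      apply mul_le_mul_of_nonneg_left _ ha
      linarith
    have hab : a * (1 - b/a) = a - b := by field_simp
    linarith [hab ▸ this]

lemma aux_kl_quad {a b : ℝ} (ha : 0 ≤ a) (hb : 0 < b) :
    a * Real.log (a / b) - a + b ≤ (a - b) ^ 2 / b := by
  rcases eq_or_lt_of_le ha with h | h
  · simp [← h]
    rw [pow_two, mul_div_assoc, div_self hb.ne', mul_one]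
  · have hlog : Real.log (a / b) ≤ a / b - 1 := Real.log_le_sub_one_of_pos (by positivity)
    have h1 : a * Real.log (a / b) ≤ a * (a/b - 1) := mul_le_mul_of_nonneg_left hlog ha
    have : a * (a/b - 1) - a + b = (a-b)^2/b := by field_simp; ring
    linarith

lemma aux_lam {c Mv : ℝ} (hM : 0 ≤ Mv)
    (h : ∀ l : ℝ, 0 < l → l ≤ 1 → 0 ≤ l * c + l ^ 2 * Mv) : 0 ≤ c := by
  by_contra hc
  push_neg at hc
  set l : ℝ := min 1 (-c / (2 * Mv + 1)) with hl
  have hl0 : 0 < l := lt_min one_pos (div_pos (by linarith) (by linarith))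
  have hl1 : l ≤ 1 := min_le_left _ _
  have hkey := h l hl0 hl1
  have hl2 : l ≤ -c / (2 * Mv + 1) := min_le_right _ _
  have hd : (0:ℝ) < 2 * Mv + 1 := by linarith
  have : l * (2 * Mv + 1) ≤ -c := by
    rw [← le_div_iff₀ hd]; exact hl2
  nlinarith [mul_pos hl0 hl0, sq_nonneg l, mul_le_mul_of_nonneg_left hl1 (mul_nonneg hl0.le hM)]

lemma aux_coord_id {a b c : ℝ} (ha : 0 ≤ a) (hb : 0 < b) (hc : 0 < c) :
    (a - c) * Real.log (c / b)
      = (a * Real.log (a / b) - a + b) - (a * Real.log (a / c) - a + c)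
        - (c * Real.log (c / b) - c + b) := by
  rcases eq_or_lt_of_le ha with h | h
  · simp [← h]; ring
  · rw [Real.log_div h.ne' hb.ne', Real.log_div h.ne' hc.ne', Real.log_div hc.ne' hb.ne']
    ring

lemma aux_coord_breg {p c b w : ℝ} (hp : 0 ≤ p) (hc : 0 < c) (hb : 0 < b) :
    (w * p + (p * Real.log (p / b) - p + b)) - (w * c + (c * Real.log (c / b) - c + b))
      = (p - c) * (w + Real.log (c / b)) + (p * Real.log (p / c) - p + c) := by
  rcases eq_or_lt_of_le hp with h | h
  · simp [← h]; ring
  · rw [Real.log_div h.ne' hb.ne', Real.log_div h.ne' hc.ne', Real.log_div hc.ne' hb.ne']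
    ring

lemma aux_pt_step {b c w : ℝ} (hb : 0 < b) (hc : 0 < c) :
    w * (b - c) - (c * Real.log (c / b) - c + b)
      ≤ b * (Real.exp (-w) - 1 + w) := by
  have h1 : (-w - Real.log (c / b)) + 1 ≤ Real.exp (-w - Real.log (c / b)) :=
    Real.add_one_le_exp _
  have h2 : Real.exp (-w - Real.log (c / b)) = Real.exp (-w) * (b / c) := by
    rw [Real.exp_sub, Real.exp_log (by positivity)]
    field_simp
  rw [h2] at h1
  have h3 := mul_le_mul_of_nonneg_left h1 hc.le
  have h4 : c * (Real.exp (-w) * (b / c)) = b * Real.exp (-w) := by field_simp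
  rw [h4] at h3
  nlinarith [h3]

section Core
variable {ι : Type*} [Fintype ι]

/-- Gradient (first-order optimality) inequality. -/
lemma aux_grad {η : ℝ} (hη : 0 < η) (z b c qq : ι → ℝ)
    (hb : ∀ j, 0 < b j) (hc : ∀ j, 0 < c j) (hqq : ∀ j, 0 ≤ qq j)
    (hmin : ∀ l : ℝ, 0 < l → l ≤ 1 →
      η * (∑ j, c j * z j) + (∑ j, (c j * Real.log (c j / b j) - c j + b j))
      ≤ η * (∑ j, (c j + l * (qq j - c j)) * z j)
        + (∑ j, ((c j + l * (qq j - c j)) * Real.log ((c j + l * (qq j - c j)) / b j)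
            - (c j + l * (qq j - c j)) + b j))) :
    0 ≤ ∑ j, (qq j - c j) * (η * z j + Real.log (c j / b j)) := by
  set G : ℝ := ∑ j, (qq j - c j) * (η * z j + Real.log (c j / b j)) with hG
  set Mv : ℝ := ∑ j, (qq j - c j) ^ 2 / c j with hMv
  have hMv0 : 0 ≤ Mv := Finset.sum_nonneg fun j _ => div_nonneg (sq_nonneg _) (hc j).le
  apply aux_lam hMv0
  intro l hl0 hl1
  have hp : ∀ j, 0 ≤ c j + l * (qq j - c j) := by
    intro j
    have : c j + l * (qq j - c j) = (1 - l) * c j + l * qq j := by ring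
    rw [this]
    have := hc j; have := hqq j
    nlinarith
  have hdiff := hmin l hl0 hl1
  -- rewrite the difference via the Bregman identity
  have hident :
      (η * (∑ j, (c j + l * (qq j - c j)) * z j)
        + (∑ j, ((c j + l * (qq j - c j)) * Real.log ((c j + l * (qq j - c j)) / b j)
            - (c j + l * (qq j - c j)) + b j)))
      - (η * (∑ j, c j * z j) + (∑ j, (c j * Real.log (c j / b j) - c j + b j)))
      = l * G + ∑ j, ((c j + l * (qq j - c j)) * Real.log ((c j + l * (qq j - c j)) / c j)
            - (c j + l * (qq j - c j)) + c j) := by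
    rw [hG, Finset.mul_sum, Finset.mul_sum, Finset.mul_sum, ← Finset.sum_add_distrib,
      ← Finset.sum_add_distrib, ← Finset.sum_sub_distrib, ← Finset.sum_add_distrib]
    apply Finset.sum_congr rfl
    intro j _
    have hbreg := aux_coord_breg (p := c j + l * (qq j - c j)) (c := c j) (b := b j)
      (w := η * z j) (hp j) (hc j) (hb j)
    -- massage
    have : (c j + l * (qq j - c j)) - c j = l * (qq j - c j) := by ring
    nlinarith [hbreg]
  have hklq : ∑ j, ((c j + l * (qq j - c j)) * Real.log ((c j + l * (qq j - c j)) / c j)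
            - (c j + l * (qq j - c j)) + c j) ≤ l ^ 2 * Mv := by
    rw [hMv, Finset.mul_sum]
    apply Finset.sum_le_sum
    intro j _
    have := aux_kl_quad (hp j) (hc j)
    have heq : (c j + l * (qq j - c j) - c j) ^ 2 / c j = l ^ 2 * ((qq j - c j) ^ 2 / c j) := by
      rw [show c j + l * (qq j - c j) - c j = l * (qq j - c j) from by ring, mul_pow]
      ring
    linarith [heq ▸ this]
  linarith [hident ▸ (sub_nonneg.mpr hdiff)]

/-- The per-round OMD bound. -/
lemma aux_round {η F : ℝ} (hη : 0 < η) (hF : 0 ≤ F) (hs : η * F ≤ 2)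
    (z b c qq : ι → ℝ)
    (hb : ∀ j, 0 < b j) (hc : ∀ j, 0 < c j) (hqq : ∀ j, 0 ≤ qq j)
    (hz : ∀ j, |z j| ≤ F)
    (hbc : ∑ j, b j = ∑ j, c j) (hbq : ∑ j, b j = ∑ j, qq j)
    (hmin : ∀ l : ℝ, 0 < l → l ≤ 1 →
      η * (∑ j, c j * z j) + (∑ j, (c j * Real.log (c j / b j) - c j + b j))
      ≤ η * (∑ j, (c j + l * (qq j - c j)) * z j)
        + (∑ j, ((c j + l * (qq j - c j)) * Real.log ((c j + l * (qq j - c j)) / b j)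
            - (c j + l * (qq j - c j)) + b j))) :
    η * ((∑ j, b j * z j) - (∑ j, qq j * z j))
      ≤ η ^ 2 * F ^ 2 * (∑ j, b j)
        + (∑ j, (qq j * Real.log (qq j / b j) - qq j + b j))
        - (∑ j, (qq j * Real.log (qq j / c j) - qq j + c j)) := by
  have hgrad := aux_grad hη z b c qq hb hc hqq hmin
  -- three-point: ∑ (qq-c) log(c/b) = K(qq,b) - K(qq,c) - K(c,b)
  have h3pt : ∑ j, (qq j - c j) * Real.log (c j / b j)
      = (∑ j, (qq j * Real.log (qq j / b j) - qq j + b j))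
        - (∑ j, (qq j * Real.log (qq j / c j) - qq j + c j))
        - (∑ j, (c j * Real.log (c j / b j) - c j + b j)) := by
    rw [← Finset.sum_sub_distrib, ← Finset.sum_sub_distrib]
    exact Finset.sum_congr rfl fun j _ => aux_coord_id (hqq j) (hb j) (hc j)
  have hgrad' : 0 ≤ η * ((∑ j, qq j * z j) - (∑ j, c j * z j))
      + ((∑ j, (qq j * Real.log (qq j / b j) - qq j + b j))
        - (∑ j, (qq j * Real.log (qq j / c j) - qq j + c j))
        - (∑ j, (c j * Real.log (c j / b j) - c j + b j))) := by
    rw [← h3pt, mul_sub, Finset.mul_sum, Finset.mul_sum, ← Finset.sum_sub_distrib,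
      ← Finset.sum_add_distrib]
    calc (0:ℝ) ≤ ∑ j, (qq j - c j) * (η * z j + Real.log (c j / b j)) := hgrad
      _ = _ := Finset.sum_congr rfl fun j _ => by ring
  -- step (**): η(I(b,z) - I(c,z)) - K(c,b) ≤ η²F² Σ b, using shifted z
  have hstep : η * ((∑ j, b j * z j) - (∑ j, c j * z j))
      - (∑ j, (c j * Real.log (c j / b j) - c j + b j))
      ≤ η ^ 2 * F ^ 2 * (∑ j, b j) := by
    have key : ∀ j, η * (z j + 2 * F / 5) * (b j - c j)
        - (c j * Real.log (c j / b j) - c j + b j) ≤ b j * (η ^ 2 * F ^ 2) := by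
      intro j
      have h1 := aux_pt_step (w := η * (z j + 2 * F / 5)) (hb j) (hc j)
      have habs := abs_le.mp (hz j)
      have hphi := aux_phi_bound (u := η * (z j + 2 * F / 5)) (s := η * F)
        (mul_nonneg hη.le hF) hs (by nlinarith [habs.1]) (by nlinarith [habs.2])
      have : b j * (Real.exp (-(η * (z j + 2 * F / 5))) - 1 + η * (z j + 2 * F / 5))
          ≤ b j * ((η * F) ^ 2) := mul_le_mul_of_nonneg_left hphi (hb j).le
      calc η * (z j + 2 * F / 5) * (b j - c j) - (c j * Real.log (c j / b j) - c j + b j)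
          ≤ b j * (Real.exp (-(η * (z j + 2 * F / 5))) - 1 + η * (z j + 2 * F / 5)) := h1
        _ ≤ b j * ((η * F) ^ 2) := this
        _ = b j * (η ^ 2 * F ^ 2) := by ring
    have hsumkey := Finset.sum_le_sum fun j (_ : j ∈ Finset.univ) => key j
    rw [Finset.sum_sub_distrib] at hsumkey
    have e1 : ∑ j, η * (z j + 2 * F / 5) * (b j - c j)
        = η * ((∑ j, b j * z j) - (∑ j, c j * z j))
          + (η * (2 * F / 5)) * ((∑ j, b j) - (∑ j, c j)) := by
      rw [mul_sub, mul_sub, Finset.mul_sum, Finset.mul_sum, Finset.mul_sum, Finset.mul_sum,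
        ← Finset.sum_sub_distrib, ← Finset.sum_sub_distrib, ← Finset.sum_add_distrib]
      exact Finset.sum_congr rfl fun j _ => by ring
    have e2 : ∑ j, b j * (η ^ 2 * F ^ 2) = η ^ 2 * F ^ 2 * (∑ j, b j) := by
      rw [← Finset.sum_mul]; ring
    have hdz : (∑ j, b j) - (∑ j, c j) = 0 := by rw [hbc]; ring
    rw [e1, e2, hdz, mul_zero, add_zero] at hsumkey
    linarith
  linarith

end Core

/-- Jensen-type bound: `Σ_{k<n} log a_k ≤ n log(B/n)` when `a_k ≥ 1`, `Σ a_k ≤ B`. -/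
lemma aux_log_sum (n : ℕ) (hn : 0 < n) (a : ℕ → ℝ) (ha : ∀ k < n, 1 ≤ a k)
    (B : ℝ) (hB : (∑ k ∈ Finset.range n, a k) ≤ B) :
    ∑ k ∈ Finset.range n, Real.log (a k) ≤ n * Real.log (B / n) := by
  have hnB : (n : ℝ) ≤ B := by
    calc (n:ℝ) = ∑ k ∈ Finset.range n, (1:ℝ) := by simp
      _ ≤ ∑ k ∈ Finset.range n, a k :=
          Finset.sum_le_sum fun k hk => ha k (Finset.mem_range.mp hk)
      _ ≤ B := hB
  have hn' : (0:ℝ) < n := by exact_mod_cast hn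
  have hB0 : (0:ℝ) < B := lt_of_lt_of_le hn' hnB
  have hm : (0:ℝ) < B / n := div_pos hB0 hn'
  have hstep : ∀ k ∈ Finset.range n, Real.log (a k) ≤ Real.log (B / n) + (a k / (B / n) - 1) := by
    intro k hk
    have hak : (0:ℝ) < a k := lt_of_lt_of_le one_pos (ha k (Finset.mem_range.mp hk))
    have h1 : Real.log (a k / (B / n)) ≤ a k / (B / n) - 1 :=
      Real.log_le_sub_one_of_pos (div_pos hak hm)
    rw [Real.log_div hak.ne' hm.ne'] at h1
    linarith
  calc ∑ k ∈ Finset.range n, Real.log (a k)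
      ≤ ∑ k ∈ Finset.range n, (Real.log (B / n) + (a k / (B / n) - 1)) :=
        Finset.sum_le_sum hstep
    _ = n * Real.log (B / n) + ((∑ k ∈ Finset.range n, a k) / (B / n) - n) := by
        rw [Finset.sum_add_distrib, Finset.sum_sub_distrib, ← Finset.sum_div]
        simp [Finset.sum_const, Finset.card_range, nsmul_eq_mul]
    _ ≤ n * Real.log (B / n) + (B / (B / n) - n) := by
        have hdd : (∑ k ∈ Finset.range n, a k) / (B / n) ≤ B / (B / n) :=
          (div_le_div_iff_of_pos_right hm).mpr hB
        linarith
    _ = n * Real.log (B / n) := by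
        have hBne : B ≠ 0 := hB0.ne'
        have hnne : (n:ℝ) ≠ 0 := hn'.ne'
        have he : B / (B / n) = n := by field_simp
        rw [he]; ring

end AuxScalar

namespace LoopFreeMDP

/-- The disjoint union of all triples `X_k × A × X_{k+1}`, `k < L`. -/
abbrev MJ (M : LoopFreeMDP) : Type := Σ k : Fin M.L, M.X k × M.A × M.X (k + 1)

lemma sum_MJ (M : LoopFreeMDP) (f : ∀ k, M.X k → M.A → M.X (k + 1) → ℝ) :
    ∑ j : MJ M, f j.1 j.2.1 j.2.2.1 j.2.2.2
      = ∑ k ∈ Finset.range M.L, ∑ x, ∑ a, ∑ x', f k x a x' := by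
  rw [← Fin.sum_univ_eq_sum_range (fun k => ∑ x, ∑ a, ∑ x', f k x a x') M.L]
  rw [show (Finset.univ : Finset (MJ M))
      = (Finset.univ : Finset (Fin M.L)).sigma (fun _ => Finset.univ) from
    (Finset.univ_sigma_univ).symm, Finset.sum_sigma]
  refine Finset.sum_congr rfl fun k _ => ?_
  rw [Fintype.sum_prod_type]
  refine Finset.sum_congr rfl fun x _ => ?_
  rw [Fintype.sum_prod_type]

lemma ip_MJ (M : LoopFreeMDP) (p w : ∀ k, M.X k → M.A → M.X (k + 1) → ℝ) :
    M.ip p w = ∑ j : MJ M,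
      p j.1 j.2.1 j.2.2.1 j.2.2.2 * w j.1 j.2.1 j.2.2.1 j.2.2.2 :=
  (sum_MJ M fun k x a x' => p k x a x' * w k x a x').symm

lemma kl_MJ (M : LoopFreeMDP) (p w : ∀ k, M.X k → M.A → M.X (k + 1) → ℝ) :
    M.kl p w = ∑ j : MJ M,
      (p j.1 j.2.1 j.2.2.1 j.2.2.2
          * Real.log (p j.1 j.2.1 j.2.2.1 j.2.2.2 / w j.1 j.2.1 j.2.2.1 j.2.2.2)
        - p j.1 j.2.1 j.2.2.1 j.2.2.2 + w j.1 j.2.1 j.2.2.1 j.2.2.2) :=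
  (sum_MJ M fun k x a x' => p k x a x' * Real.log (p k x a x' / w k x a x')
      - p k x a x' + w k x a x').symm

lemma sum_MJ_layers (M : LoopFreeMDP) (p : ∀ k, M.X k → M.A → M.X (k + 1) → ℝ)
    (h : ∀ k < M.L, ∑ x, ∑ a, ∑ x', p k x a x' = 1) :
    ∑ j : MJ M, p j.1 j.2.1 j.2.2.1 j.2.2.2 = M.L := by
  rw [sum_MJ M p, Finset.sum_congr rfl fun k hk => h k (Finset.mem_range.mp hk)]
  simp

end LoopFreeMDP

set_option maxHeartbeats 1600000 in
/-- **Theorem 5.3 (deterministic form, general `η`).** Online Mirror Descent with the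
unnormalized KL divergence, started at the uniform occupancy measure `q_1` and updated by
`q_{t+1} = argmin_{q ∈ K_t} η⟨q,z_t⟩ + D(q‖q_t)` over convex sets `K_t` of layerwise
normalized vectors, with `‖z_t‖_∞ ≤ F`, guarantees for every comparator `q ∈ ⋂_t K_t`:
`Σ_{t=1}^T ⟨q_t − q, z_t⟩ ≤ ηF²LT + (L/η)·ln(|X|²|A|/L²)`.
(Indices are shifted: here `q t` denotes `q_{t+1}` of the paper, `t = 0,…,T`.) -/
theorem omd_regret_general_eta (M : LoopFreeMDP) (T : ℕ) (hT : 1 ≤ T)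
    (η F : ℝ) (hη : 0 < η) (hF : 0 ≤ F)
    (z : ℕ → ∀ k, M.X k → M.A → M.X (k + 1) → ℝ)
    (K : ℕ → Set (∀ k, M.X k → M.A → M.X (k + 1) → ℝ))
    (q : ℕ → ∀ k, M.X k → M.A → M.X (k + 1) → ℝ)
    (hq1 : ∀ k < M.L, ∀ (x : M.X k) (a : M.A) (x' : M.X (k + 1)),
      q 0 k x a x' = 1 / ((Fintype.card (M.X k) : ℝ) * (Fintype.card M.A : ℝ) *
        (Fintype.card (M.X (k + 1)) : ℝ)))
    (hz : ∀ t < T, ∀ k < M.L, ∀ (x : M.X k) (a : M.A) (x' : M.X (k + 1)),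
      |z t k x a x'| ≤ F)
    (hKsub : ∀ t < T, ∀ p ∈ K t,
      (∀ k < M.L, ∀ (x : M.X k) (a : M.A) (x' : M.X (k + 1)),
        0 ≤ p k x a x' ∧ p k x a x' ≤ 1) ∧
      (∀ k < M.L, ∑ x : M.X k, ∑ a : M.A, ∑ x' : M.X (k + 1), p k x a x' = 1))
    (hKconv : ∀ t < T, Convex ℝ (K t))
    (hmem : ∀ t < T, q (t + 1) ∈ K t)
    (hpos : ∀ t < T, ∀ k < M.L, ∀ (x : M.X k) (a : M.A) (x' : M.X (k + 1)),
      0 < q (t + 1) k x a x')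
    (hmin : ∀ t < T, ∀ p ∈ K t,
      η * M.ip (q (t + 1)) (z t) + M.kl (q (t + 1)) (q t)
        ≤ η * M.ip p (z t) + M.kl p (q t)) :
    ∀ qq, (∀ t < T, qq ∈ K t) →
      ∑ t ∈ Finset.range T,
          M.ip (fun k x a x' => q t k x a x' - qq k x a x') (z t)
        ≤ η * F ^ 2 * M.L * T
          + (M.L / η) * Real.log ((M.cardX : ℝ) ^ 2 * (Fintype.card M.A : ℝ) / (M.L : ℝ) ^ 2) := by
  intro qq hqqK
  classical
  have hT0 : 0 < T := hT
  have hL0 : 0 < M.L := M.hL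
  have hLR : (0:ℝ) < (M.L:ℝ) := by exact_mod_cast hL0
  have hcard : ∀ k, k ≤ M.L → 0 < Fintype.card (M.X k) := fun k hk =>
    Fintype.card_pos_iff.mpr (M.nonemptyX k hk)
  have hA0 : 0 < Fintype.card M.A := Fintype.card_pos
  have hA0R : (0:ℝ) < (Fintype.card M.A : ℝ) := by exact_mod_cast hA0
  set C : ℝ := Real.log ((M.cardX : ℝ) ^ 2 * (Fintype.card M.A : ℝ) / (M.L : ℝ) ^ 2) with hC
  -- |X| ≥ L + 1
  have hcardXnat : M.L + 1 ≤ M.cardX := by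
    calc M.L + 1 = ∑ _k ∈ Finset.range (M.L + 1), 1 := by simp
      _ ≤ ∑ k ∈ Finset.range (M.L + 1), Fintype.card (M.X k) :=
          Finset.sum_le_sum fun k hk => hcard k (by
            have := Finset.mem_range.mp hk; omega)
      _ = M.cardX := rfl
  have hcardX : (M.L:ℝ) + 1 ≤ (M.cardX : ℝ) := by exact_mod_cast hcardXnat
  have hcardX0 : (0:ℝ) < (M.cardX : ℝ) := by linarith
  have hC0 : 0 ≤ C := by
    apply Real.log_nonneg
    rw [le_div_iff₀ (pow_pos hLR 2)]
    have h1 : (1:ℝ) ≤ (Fintype.card M.A : ℝ) := by exact_mod_cast hA0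
    nlinarith [hcardX, hLR]
  -- facts about q 0
  have hq0pos : ∀ k < M.L, ∀ (x : M.X k) (a : M.A) (x' : M.X (k+1)), 0 < q 0 k x a x' := by
    intro k hk x a x'
    rw [hq1 k hk x a x']
    have h1 : (0:ℝ) < (Fintype.card (M.X k) : ℝ) := by exact_mod_cast hcard k hk.le
    have h2 : (0:ℝ) < (Fintype.card (M.X (k+1)) : ℝ) := by exact_mod_cast hcard (k+1) hk
    positivity
  have hq0sum : ∀ k < M.L, ∑ x, ∑ a, ∑ x', q 0 k x a x' = 1 := by
    intro k hk
    rw [Finset.sum_congr rfl fun x _ => Finset.sum_congr rfl fun a _ =>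
      Finset.sum_congr rfl fun x' _ => hq1 k hk x a x']
    have h1 : (0:ℝ) < (Fintype.card (M.X k) : ℝ) := by exact_mod_cast hcard k hk.le
    have h2 : (0:ℝ) < (Fintype.card (M.X (k+1)) : ℝ) := by exact_mod_cast hcard (k+1) hk
    simp only [Finset.sum_const, Finset.card_univ, nsmul_eq_mul]
    field_simp
  -- facts about all q t, t ≤ T
  have hqpos : ∀ t ≤ T, ∀ k < M.L, ∀ (x : M.X k) (a : M.A) (x' : M.X (k+1)),
      0 < q t k x a x' := by
    intro t ht
    cases t with
    | zero => exact hq0pos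
    | succ t' => exact fun k hk x a x' => hpos t' (by omega) k hk x a x'
  have hqsum : ∀ t ≤ T, ∀ k < M.L, ∑ x, ∑ a, ∑ x', q t k x a x' = 1 := by
    intro t ht
    cases t with
    | zero => exact hq0sum
    | succ t' => exact (hKsub t' (by omega) _ (hmem t' (by omega))).2
  -- facts about qq
  have hqqprop := hKsub 0 hT0 qq (hqqK 0 hT0)
  have hqq0 : ∀ k < M.L, ∀ (x : M.X k) (a : M.A) (x' : M.X (k+1)), 0 ≤ qq k x a x' :=
    fun k hk x a x' => (hqqprop.1 k hk x a x').1
  have hqq1 : ∀ k < M.L, ∀ (x : M.X k) (a : M.A) (x' : M.X (k+1)), qq k x a x' ≤ 1 :=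
    fun k hk x a x' => (hqqprop.1 k hk x a x').2
  have hqqsum : ∀ k < M.L, ∑ x, ∑ a, ∑ x', qq k x a x' = 1 := hqqprop.2
  have hqqMJ : ∑ j : LoopFreeMDP.MJ M, qq j.1 j.2.1 j.2.2.1 j.2.2.2 = M.L :=
    LoopFreeMDP.sum_MJ_layers M qq hqqsum
  -- ip difference
  have ipdiff : ∀ t, M.ip (fun k x a x' => q t k x a x' - qq k x a x') (z t)
      = M.ip (q t) (z t) - M.ip qq (z t) := by
    intro t
    rw [LoopFreeMDP.ip_MJ, LoopFreeMDP.ip_MJ, LoopFreeMDP.ip_MJ, ← Finset.sum_sub_distrib]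
    exact Finset.sum_congr rfl fun j _ => by ring
  have hsum_rw : ∑ t ∈ Finset.range T,
        M.ip (fun k x a x' => q t k x a x' - qq k x a x') (z t)
      = ∑ t ∈ Finset.range T, (M.ip (q t) (z t) - M.ip qq (z t)) :=
    Finset.sum_congr rfl fun t _ => ipdiff t
  rw [hsum_rw]
  rcases le_or_gt (η * F) 2 with hcase | hcase
  · -- main case : η F ≤ 2
    -- per-round bound
    have hround : ∀ t < T, η * (M.ip (q t) (z t) - M.ip qq (z t))
        ≤ η ^ 2 * F ^ 2 * M.L + (M.kl qq (q t) - M.kl qq (q (t+1))) := by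
      intro t ht
      have hb : ∀ j : LoopFreeMDP.MJ M, 0 < q t j.1 j.2.1 j.2.2.1 j.2.2.2 :=
        fun j => hqpos t ht.le j.1 j.1.isLt _ _ _
      have hc : ∀ j : LoopFreeMDP.MJ M, 0 < q (t+1) j.1 j.2.1 j.2.2.1 j.2.2.2 :=
        fun j => hqpos (t+1) (by omega) j.1 j.1.isLt _ _ _
      have hqqj : ∀ j : LoopFreeMDP.MJ M, 0 ≤ qq j.1 j.2.1 j.2.2.1 j.2.2.2 :=
        fun j => hqq0 j.1 j.1.isLt _ _ _
      have hzj : ∀ j : LoopFreeMDP.MJ M, |z t j.1 j.2.1 j.2.2.1 j.2.2.2| ≤ F :=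
        fun j => hz t ht j.1 j.1.isLt _ _ _
      have hbsum : ∑ j : LoopFreeMDP.MJ M, q t j.1 j.2.1 j.2.2.1 j.2.2.2 = M.L :=
        LoopFreeMDP.sum_MJ_layers M (q t) (hqsum t ht.le)
      have hcsum : ∑ j : LoopFreeMDP.MJ M, q (t+1) j.1 j.2.1 j.2.2.1 j.2.2.2 = M.L :=
        LoopFreeMDP.sum_MJ_layers M (q (t+1)) (hqsum (t+1) (by omega))
      have hmin' : ∀ l : ℝ, 0 < l → l ≤ 1 →
          η * (∑ j : LoopFreeMDP.MJ M,
              q (t+1) j.1 j.2.1 j.2.2.1 j.2.2.2 * z t j.1 j.2.1 j.2.2.1 j.2.2.2)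
            + (∑ j : LoopFreeMDP.MJ M,
                (q (t+1) j.1 j.2.1 j.2.2.1 j.2.2.2
                    * Real.log (q (t+1) j.1 j.2.1 j.2.2.1 j.2.2.2
                        / q t j.1 j.2.1 j.2.2.1 j.2.2.2)
                  - q (t+1) j.1 j.2.1 j.2.2.1 j.2.2.2 + q t j.1 j.2.1 j.2.2.1 j.2.2.2))
          ≤ η * (∑ j : LoopFreeMDP.MJ M,
              (q (t+1) j.1 j.2.1 j.2.2.1 j.2.2.2
                  + l * (qq j.1 j.2.1 j.2.2.1 j.2.2.2 - q (t+1) j.1 j.2.1 j.2.2.1 j.2.2.2))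
                * z t j.1 j.2.1 j.2.2.1 j.2.2.2)
            + (∑ j : LoopFreeMDP.MJ M,
                ((q (t+1) j.1 j.2.1 j.2.2.1 j.2.2.2
                    + l * (qq j.1 j.2.1 j.2.2.1 j.2.2.2 - q (t+1) j.1 j.2.1 j.2.2.1 j.2.2.2))
                  * Real.log ((q (t+1) j.1 j.2.1 j.2.2.1 j.2.2.2
                      + l * (qq j.1 j.2.1 j.2.2.1 j.2.2.2
                          - q (t+1) j.1 j.2.1 j.2.2.1 j.2.2.2))
                      / q t j.1 j.2.1 j.2.2.1 j.2.2.2)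
                  - (q (t+1) j.1 j.2.1 j.2.2.1 j.2.2.2
                      + l * (qq j.1 j.2.1 j.2.2.1 j.2.2.2
                          - q (t+1) j.1 j.2.1 j.2.2.1 j.2.2.2))
                  + q t j.1 j.2.1 j.2.2.1 j.2.2.2)) := by
        intro l hl0 hl1
        have hpK : (1 - l) • q (t+1) + l • qq ∈ K t :=
          hKconv t ht (hmem t ht) (hqqK t ht) (by linarith) (by linarith) (by ring)
        have h := hmin t ht _ hpK
        have e1 : M.ip ((1 - l) • q (t+1) + l • qq) (z t)
            = ∑ j : LoopFreeMDP.MJ M,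
              (q (t+1) j.1 j.2.1 j.2.2.1 j.2.2.2
                  + l * (qq j.1 j.2.1 j.2.2.1 j.2.2.2 - q (t+1) j.1 j.2.1 j.2.2.1 j.2.2.2))
                * z t j.1 j.2.1 j.2.2.1 j.2.2.2 := by
          rw [LoopFreeMDP.ip_MJ]
          refine Finset.sum_congr rfl fun j _ => ?_
          simp only [Pi.add_apply, Pi.smul_apply, smul_eq_mul]
          ring
        have e2 : M.kl ((1 - l) • q (t+1) + l • qq) (q t)
            = ∑ j : LoopFreeMDP.MJ M,
              ((q (t+1) j.1 j.2.1 j.2.2.1 j.2.2.2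
                  + l * (qq j.1 j.2.1 j.2.2.1 j.2.2.2 - q (t+1) j.1 j.2.1 j.2.2.1 j.2.2.2))
                * Real.log ((q (t+1) j.1 j.2.1 j.2.2.1 j.2.2.2
                    + l * (qq j.1 j.2.1 j.2.2.1 j.2.2.2 - q (t+1) j.1 j.2.1 j.2.2.1 j.2.2.2))
                    / q t j.1 j.2.1 j.2.2.1 j.2.2.2)
                - (q (t+1) j.1 j.2.1 j.2.2.1 j.2.2.2
                    + l * (qq j.1 j.2.1 j.2.2.1 j.2.2.2 - q (t+1) j.1 j.2.1 j.2.2.1 j.2.2.2))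
                + q t j.1 j.2.1 j.2.2.1 j.2.2.2) := by
          rw [LoopFreeMDP.kl_MJ]
          refine Finset.sum_congr rfl fun j _ => ?_
          simp only [Pi.add_apply, Pi.smul_apply, smul_eq_mul]
          rw [show (1 - l) * q (t+1) j.1 j.2.1 j.2.2.1 j.2.2.2
                + l * qq j.1 j.2.1 j.2.2.1 j.2.2.2
              = q (t+1) j.1 j.2.1 j.2.2.1 j.2.2.2
                + l * (qq j.1 j.2.1 j.2.2.1 j.2.2.2 - q (t+1) j.1 j.2.1 j.2.2.1 j.2.2.2)
            from by ring]
        rw [e1, e2, LoopFreeMDP.ip_MJ M (q (t+1)) (z t),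
          LoopFreeMDP.kl_MJ M (q (t+1)) (q t)] at h
        exact h
      have hkey := aux_round (ι := LoopFreeMDP.MJ M) hη hF hcase
        (fun j => z t j.1 j.2.1 j.2.2.1 j.2.2.2)
        (fun j => q t j.1 j.2.1 j.2.2.1 j.2.2.2)
        (fun j => q (t+1) j.1 j.2.1 j.2.2.1 j.2.2.2)
        (fun j => qq j.1 j.2.1 j.2.2.1 j.2.2.2)
        hb hc hqqj hzj (by rw [hbsum, hcsum]) (by rw [hbsum, hqqMJ]) hmin'
      rw [← LoopFreeMDP.ip_MJ, ← LoopFreeMDP.ip_MJ, hbsum, ← LoopFreeMDP.kl_MJ,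
        ← LoopFreeMDP.kl_MJ] at hkey
      linarith
    -- telescoping
    have htel : η * (∑ t ∈ Finset.range T, (M.ip (q t) (z t) - M.ip qq (z t)))
        ≤ η ^ 2 * F ^ 2 * M.L * T + (M.kl qq (q 0) - M.kl qq (q T)) := by
      rw [Finset.mul_sum]
      calc ∑ t ∈ Finset.range T, η * (M.ip (q t) (z t) - M.ip qq (z t))
          ≤ ∑ t ∈ Finset.range T,
              (η ^ 2 * F ^ 2 * M.L + (M.kl qq (q t) - M.kl qq (q (t+1)))) :=
            Finset.sum_le_sum fun t ht => hround t (Finset.mem_range.mp ht)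
        _ = T * (η ^ 2 * F ^ 2 * M.L) + (M.kl qq (q 0) - M.kl qq (q T)) := by
            rw [Finset.sum_add_distrib, Finset.sum_range_sub' (fun t => M.kl qq (q t)) T,
              Finset.sum_const, Finset.card_range, nsmul_eq_mul]
        _ = η ^ 2 * F ^ 2 * M.L * T + (M.kl qq (q 0) - M.kl qq (q T)) := by ring
    have hklT : 0 ≤ M.kl qq (q T) := by
      rw [LoopFreeMDP.kl_MJ]
      exact Finset.sum_nonneg fun j _ => aux_kl_nonneg (hqq0 j.1 j.1.isLt _ _ _)
        (hqpos T le_rfl j.1 j.1.isLt _ _ _)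
    -- initial KL bound
    have hkl0 : M.kl qq (q 0) ≤ ∑ k ∈ Finset.range M.L,
        Real.log ((Fintype.card (M.X k) : ℝ) * (Fintype.card M.A : ℝ)
          * (Fintype.card (M.X (k+1)) : ℝ)) := by
      rw [LoopFreeMDP.kl]
      apply Finset.sum_le_sum
      intro k hk
      have hk' := Finset.mem_range.mp hk
      set N : ℝ := (Fintype.card (M.X k) : ℝ) * (Fintype.card M.A : ℝ)
        * (Fintype.card (M.X (k+1)) : ℝ) with hNdef
      have hXk : (0:ℝ) < (Fintype.card (M.X k) : ℝ) := by exact_mod_cast hcard k hk'.le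
      have hXk1 : (0:ℝ) < (Fintype.card (M.X (k+1)) : ℝ) := by exact_mod_cast hcard (k+1) hk'
      have hN0 : (0:ℝ) < N := by rw [hNdef]; positivity
      have hco : ∀ (x : M.X k) (a : M.A) (x' : M.X (k+1)),
          qq k x a x' * Real.log (qq k x a x' / q 0 k x a x') - qq k x a x' + q 0 k x a x'
          = qq k x a x' * Real.log (qq k x a x') + qq k x a x' * Real.log N
            - qq k x a x' + 1 / N := by
        intro x a x'
        rw [hq1 k hk' x a x', ← hNdef,
          show qq k x a x' / (1 / N) = qq k x a x' * N from by field_simp]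
        rcases eq_or_lt_of_le (hqq0 k hk' x a x') with h0 | h0
        · rw [← h0]; simp
        · rw [Real.log_mul h0.ne' hN0.ne']; ring
      rw [Finset.sum_congr rfl fun x _ => Finset.sum_congr rfl fun a _ =>
        Finset.sum_congr rfl fun x' _ => hco x a x']
      have hsplit : (∑ x, ∑ a, ∑ x', (qq k x a x' * Real.log (qq k x a x')
            + qq k x a x' * Real.log N - qq k x a x' + 1 / N))
          = (∑ x, ∑ a, ∑ x', qq k x a x' * Real.log (qq k x a x'))
            + (∑ x, ∑ a, ∑ x', qq k x a x') * Real.log N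
            - (∑ x, ∑ a, ∑ x', qq k x a x')
            + ((Fintype.card (M.X k) : ℝ) * ((Fintype.card M.A : ℝ)
                * ((Fintype.card (M.X (k+1)) : ℝ) * (1 / N)))) := by
        simp only [Finset.sum_add_distrib, Finset.sum_sub_distrib, ← Finset.sum_mul,
          Finset.sum_const, Finset.card_univ, nsmul_eq_mul]
        ring
      rw [hsplit, hqqsum k hk']
      have hent : (∑ x, ∑ a, ∑ x', qq k x a x' * Real.log (qq k x a x')) ≤ 0 := by
        apply Finset.sum_nonpos; intro x _
        apply Finset.sum_nonpos; intro a _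
        apply Finset.sum_nonpos; intro x' _
        have h1 := hqq0 k hk' x a x'
        have h2 := Real.log_nonpos h1 (hqq1 k hk' x a x')
        nlinarith
      have hNN : (Fintype.card (M.X k) : ℝ) * ((Fintype.card M.A : ℝ)
          * ((Fintype.card (M.X (k+1)) : ℝ) * (1 / N))) = 1 := by
        rw [hNdef]; field_simp
      rw [hNN]
      linarith
    -- Jensen bound on the sum of logs
    have hjensen : ∑ k ∈ Finset.range M.L,
        Real.log ((Fintype.card (M.X k) : ℝ) * (Fintype.card M.A : ℝ)
          * (Fintype.card (M.X (k+1)) : ℝ)) ≤ (M.L : ℝ) * C := by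
      have hXpos : ∀ k < M.L, (0:ℝ) < (Fintype.card (M.X k) : ℝ) :=
        fun k hk => by exact_mod_cast hcard k hk.le
      have hXpos1 : ∀ k < M.L, (0:ℝ) < (Fintype.card (M.X (k+1)) : ℝ) :=
        fun k hk => by exact_mod_cast hcard (k+1) hk
      have hlogsplit : ∀ k ∈ Finset.range M.L,
          Real.log ((Fintype.card (M.X k) : ℝ) * (Fintype.card M.A : ℝ)
            * (Fintype.card (M.X (k+1)) : ℝ))
          = Real.log (Fintype.card (M.X k) : ℝ) + Real.log (Fintype.card M.A : ℝ)
            + Real.log (Fintype.card (M.X (k+1)) : ℝ) := by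
        intro k hk
        have hk' := Finset.mem_range.mp hk
        rw [Real.log_mul (mul_pos (hXpos k hk') hA0R).ne' (hXpos1 k hk').ne',
          Real.log_mul (hXpos k hk').ne' hA0R.ne']
      rw [Finset.sum_congr rfl hlogsplit, Finset.sum_add_distrib, Finset.sum_add_distrib,
        Finset.sum_const, Finset.card_range, nsmul_eq_mul]
      -- the two Jensen sums
      have hcardXsum : (M.cardX : ℝ) = ∑ k ∈ Finset.range (M.L + 1),
          (Fintype.card (M.X k) : ℝ) := by
        rw [LoopFreeMDP.cardX]; push_cast; rfl
      have hsum1 : ∑ k ∈ Finset.range M.L, (Fintype.card (M.X k) : ℝ) ≤ (M.cardX : ℝ) := by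
        rw [hcardXsum]
        exact Finset.sum_le_sum_of_subset_of_nonneg
          (Finset.range_subset_range.mpr (Nat.le_succ _)) (fun k _ _ => by positivity)
      have hsum2 : ∑ k ∈ Finset.range M.L, (Fintype.card (M.X (k+1)) : ℝ)
          ≤ (M.cardX : ℝ) := by
        rw [hcardXsum, Finset.sum_range_succ' (fun k => (Fintype.card (M.X k) : ℝ)) M.L]
        have : (0:ℝ) ≤ (Fintype.card (M.X 0) : ℝ) := by positivity
        linarith
      have h1 := aux_log_sum M.L hL0 (fun k => (Fintype.card (M.X k) : ℝ))
        (fun k hk => Nat.one_le_cast.mpr (hcard k hk.le)) (M.cardX : ℝ) hsum1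
      have h2 := aux_log_sum M.L hL0 (fun k => (Fintype.card (M.X (k+1)) : ℝ))
        (fun k hk => Nat.one_le_cast.mpr (hcard (k+1) hk)) (M.cardX : ℝ) hsum2
      have hXLlog : Real.log ((M.cardX : ℝ) / (M.L : ℝ))
          = Real.log (M.cardX : ℝ) - Real.log (M.L : ℝ) :=
        Real.log_div hcardX0.ne' hLR.ne'
      rw [hXLlog] at h1 h2
      have hCexp : C = 2 * Real.log (M.cardX : ℝ) + Real.log (Fintype.card M.A : ℝ)
          - 2 * Real.log (M.L : ℝ) := by
        rw [hC, Real.log_div (mul_pos (pow_pos hcardX0 2) hA0R).ne' (pow_pos hLR 2).ne',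
          Real.log_mul (pow_pos hcardX0 2).ne' hA0R.ne', Real.log_pow, Real.log_pow]
        push_cast; ring
      rw [hCexp]
      have hre : (M.L : ℝ) * (2 * Real.log (M.cardX : ℝ)
            + Real.log (Fintype.card M.A : ℝ) - 2 * Real.log (M.L : ℝ))
          = (M.L : ℝ) * (Real.log (M.cardX : ℝ) - Real.log (M.L : ℝ))
            + (M.L : ℝ) * Real.log (Fintype.card M.A : ℝ)
            + (M.L : ℝ) * (Real.log (M.cardX : ℝ) - Real.log (M.L : ℝ)) := by ring
      rw [hre]
      linarith
    -- final assembly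
    have hfinal : η * (∑ t ∈ Finset.range T, (M.ip (q t) (z t) - M.ip qq (z t)))
        ≤ η ^ 2 * F ^ 2 * M.L * T + (M.L : ℝ) * C := by linarith
    have hrhs : η * (η * F ^ 2 * M.L * T + ((M.L : ℝ) / η) * C)
        = η ^ 2 * F ^ 2 * M.L * T + (M.L : ℝ) * C := by
      field_simp
    apply le_of_mul_le_mul_left _ hη
    rw [hrhs]
    exact hfinal
  · -- trivial case : 2 < η F
    have hbound : ∀ t < T, M.ip (q t) (z t) - M.ip qq (z t) ≤ 2 * M.L * F := by
      intro t ht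
      have hco : ∀ j : LoopFreeMDP.MJ M,
          q t j.1 j.2.1 j.2.2.1 j.2.2.2 * z t j.1 j.2.1 j.2.2.1 j.2.2.2
            - qq j.1 j.2.1 j.2.2.1 j.2.2.2 * z t j.1 j.2.1 j.2.2.1 j.2.2.2
          ≤ (q t j.1 j.2.1 j.2.2.1 j.2.2.2 + qq j.1 j.2.1 j.2.2.1 j.2.2.2) * F := by
        intro j
        have h1 := (hqpos t ht.le j.1 j.1.isLt j.2.1 j.2.2.1 j.2.2.2).le
        have h2 := hqq0 j.1 j.1.isLt j.2.1 j.2.2.1 j.2.2.2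
        have h3 := abs_le.mp (hz t ht j.1 j.1.isLt j.2.1 j.2.2.1 j.2.2.2)
        nlinarith [mul_nonneg h1 (by linarith [h3.2] : (0:ℝ) ≤ F - z t j.1 j.2.1 j.2.2.1 j.2.2.2),
          mul_nonneg h2 (by linarith [h3.1] : (0:ℝ) ≤ F + z t j.1 j.2.1 j.2.2.1 j.2.2.2)]
      have hbsum : ∑ j : LoopFreeMDP.MJ M, q t j.1 j.2.1 j.2.2.1 j.2.2.2 = M.L :=
        LoopFreeMDP.sum_MJ_layers M (q t) (hqsum t ht.le)
      calc M.ip (q t) (z t) - M.ip qq (z t)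
          = ∑ j : LoopFreeMDP.MJ M,
              (q t j.1 j.2.1 j.2.2.1 j.2.2.2 * z t j.1 j.2.1 j.2.2.1 j.2.2.2
                - qq j.1 j.2.1 j.2.2.1 j.2.2.2 * z t j.1 j.2.1 j.2.2.1 j.2.2.2) := by
            rw [LoopFreeMDP.ip_MJ, LoopFreeMDP.ip_MJ, ← Finset.sum_sub_distrib]
        _ ≤ ∑ j : LoopFreeMDP.MJ M,
              (q t j.1 j.2.1 j.2.2.1 j.2.2.2 + qq j.1 j.2.1 j.2.2.1 j.2.2.2) * F :=
            Finset.sum_le_sum fun j _ => hco j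
        _ = ((∑ j : LoopFreeMDP.MJ M, q t j.1 j.2.1 j.2.2.1 j.2.2.2)
              + ∑ j : LoopFreeMDP.MJ M, qq j.1 j.2.1 j.2.2.1 j.2.2.2) * F := by
            rw [← Finset.sum_add_distrib, Finset.sum_mul]
        _ = 2 * M.L * F := by rw [hbsum, hqqMJ]; ring
    have hT' : (0:ℝ) < (T:ℝ) := by exact_mod_cast hT0
    have hdiv : 0 ≤ ((M.L : ℝ) / η) * C := mul_nonneg (div_nonneg hLR.le hη.le) hC0
    calc ∑ t ∈ Finset.range T, (M.ip (q t) (z t) - M.ip qq (z t))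
        ≤ ∑ _t ∈ Finset.range T, 2 * M.L * F :=
          Finset.sum_le_sum fun t ht => hbound t (Finset.mem_range.mp ht)
      _ = T * (2 * M.L * F) := by rw [Finset.sum_const, Finset.card_range, nsmul_eq_mul]
      _ ≤ η * F ^ 2 * M.L * T := by
          nlinarith [mul_nonneg (sub_nonneg.mpr hcase.le)
            (mul_nonneg (mul_nonneg hF hLR.le) hT'.le)]
      _ ≤ η * F ^ 2 * M.L * T + ((M.L : ℝ) / η) * C := by linarith
end

section
/- (Theorem 5.3, tuned learning rate) In the setting of the deterministic Online Mirror Descent theorem — an episodic loop-free MDP with triple set J = ⋃_{k=0}^{L−1} X_k×A×X_{k+1}, |X| = Σ_{k=0}^{L}|X_k|, T ≥ 1, F > 0, uniform initial point q_1(x,a,x') = 1/(|X_k||A||X_{k+1}|), vectors z_t ∈ ℝ^J with ‖z_t‖_∞ ≤ F, convex sets K_t contained in { q ∈ [0,1]^J : every layer-block of q sums to 1 }, and q_{t+1} ∈ K_t componentwise positive minimizing q ↦ η⟨q,z_t⟩ + D(q‖q_t) over K_t — assume additionally L² < |X|²|A| and set η = √( ln(|X|²|A|/L²) / (F²T) ).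 Then for every q ∈ ⋂_{t=1}^T K_t: Σ_{t=1}^T ⟨q_t − q, z_t⟩ ≤ 2FL·√( 2T·ln(|X||A|/L) ). -/
/-
Online mirror descent with the unnormalized KL divergence `D`. The first-order optimality
condition of a step, combined with the three-point identity for `D`, gives
`η⟨q_{t+1} - q, z_t⟩ ≤ D(q‖q_t) - D(q‖q_{t+1}) - D(q_{t+1}‖q_t)`, while the local Pinsker-type
bound `c|a - b| ≤ (a log (a/b) - a + b) + c²(a + b)/2`, a consequence of
`(√a - √b)² ≤ a log (a/b) - a + b`, controls `η⟨q_t - q_{t+1}, z_t⟩` by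
`D(q_{t+1}‖q_t) + η²F²L`, since every iterate has total mass `L`. Telescoping gives
`η · Regret ≤ D(q‖q_1) + Tη²F²L`; the uniform start has `D(q‖q_1) ≤ L log (|X|²|A|/L²)` by
AM-GM on the layer sizes, and the tuned `η` balances the two terms.
-/

open Finset

open Real

section Scalar

variable {a b : ℝ}

lemma sq_sqrt_sub_sqrt_le_mul_log_div_sub_add (ha : 0 ≤ a) (hb : 0 < b) :
    (√a - √b) ^ 2 ≤ a * log (a / b) - a + b := by
  rcases ha.eq_or_lt with rfl | ha
  · simp [sq_sqrt hb.le]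
  have hsa : 0 < √a := sqrt_pos.2 ha
  have hsb : 0 < √b := sqrt_pos.2 hb
  have hlog : 2 * (1 - √b / √a) ≤ log (a / b) := by
    have h := one_sub_inv_le_log_of_pos (div_pos hsa hsb)
    rw [inv_div] at h
    rw [show a / b = (√a / √b) ^ 2 by rw [div_pow, sq_sqrt ha.le, sq_sqrt hb.le], log_pow]
    push_cast
    linarith
  have hexpand : a * (2 * (1 - √b / √a)) = 2 * a - 2 * √a * √b := by
    field_simp
    linear_combination √b * sq_sqrt ha.le
  nlinarith [sq_sqrt ha.le, sq_sqrt hb.le, mul_le_mul_of_nonneg_left hlog ha.le]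

lemma mul_log_div_sub_add_nonneg (ha : 0 ≤ a) (hb : 0 < b) : 0 ≤ a * log (a / b) - a + b :=
  (sq_nonneg _).trans (sq_sqrt_sub_sqrt_le_mul_log_div_sub_add ha hb)

lemma mul_abs_sub_le_mul_log_div_sub_add_add {c : ℝ} (ha : 0 ≤ a) (hb : 0 < b) :
    c * |a - b| ≤ (a * log (a / b) - a + b) + c ^ 2 * (a + b) / 2 := by
  have hsplit : |a - b| = |√a - √b| * (√a + √b) := by
    have : a - b = (√a - √b) * (√a + √b) := by
      linear_combination (sq_sqrt ha).symm + sq_sqrt hb.le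
    rw [this, abs_mul, abs_of_nonneg (by positivity : 0 ≤ √a + √b)]
  rw [hsplit]
  nlinarith [sq_sqrt_sub_sqrt_le_mul_log_div_sub_add ha hb, sq_abs (√a - √b), sq_sqrt ha,
    sq_sqrt hb.le, sq_nonneg (|√a - √b| - c * (√a + √b) / 2), sq_nonneg (√a - √b)]

lemma sub_mul_log_div_eq {p : ℝ} (ha : 0 < a) (hb : 0 < b) :
    (p - a) * log (a / b) = (p * log (p / b) - p + b) - (p * log (p / a) - p + a)
      - (a * log (a / b) - a + b) := by
  rcases eq_or_ne p 0 with rfl | hp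
  · simp only [zero_sub, zero_div, log_zero, mul_zero, sub_zero, zero_add]
    ring
  · rw [log_div hp hb.ne', log_div hp ha.ne', log_div ha.ne' hb.ne']
    ring

lemma hasDerivAt_mul_log_div_sub_add (ha : 0 < a) (hb : 0 < b) :
    HasDerivAt (fun x => x * log (x / b) - x + b) (log (a / b)) a := by
  have h := (((hasDerivAt_id' a).mul (((hasDerivAt_id' a).div_const b).log
    (div_pos ha hb).ne')).sub (hasDerivAt_id' a)).add_const b
  refine h.congr_deriv ?_
  field_simp
  ring

end Scalar

lemma HasDerivAt.nonneg_of_isMinOn_Icc {g : ℝ → ℝ} {d : ℝ} (hg : HasDerivAt g d 0)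
    (hmin : IsMinOn g (Set.Icc 0 1) 0) : 0 ≤ d := by
  have h := hmin.localize.hasFDerivWithinAt_nonneg hg.hasFDerivAt.hasFDerivWithinAt
    (y := 1) (mem_posTangentConeAt_of_segment_subset (by simp [segment_eq_Icc]))
  simpa using h

lemma sum_log_le_card_mul_log_div {ι : Type*} {s : Finset ι} {N : ι → ℝ} {S : ℝ}
    (hN : ∀ i ∈ s, 0 < N i) (hS : ∑ i ∈ s, N i ≤ S) : ∑ i ∈ s, log (N i) ≤ #s * log (S / #s) := by
  rcases s.eq_empty_or_nonempty with rfl | hs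
  · simp
  have hn : (0 : ℝ) < #s := by exact_mod_cast hs.card_pos
  have hSpos : 0 < S := (sum_pos hN hs).trans_le hS
  -- tangent line of `log` at `S / #s`
  have htangent : ∀ i ∈ s, log (N i) ≤ log (S / #s) + (#s / S * N i - 1) := by
    intro i hi
    have hNi := hN i hi
    calc log (N i) = log (S / #s) + log (#s / S * N i) := by
          rw [← log_mul (by positivity) (by positivity)]
          congr 1
          field_simp
      _ ≤ _ := by gcongr; exact log_le_sub_one_of_pos (by positivity)
  calc ∑ i ∈ s, log (N i) ≤ ∑ i ∈ s, (log (S / #s) + (#s / S * N i - 1)) := sum_le_sum htangent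
    _ = #s * log (S / #s) + (#s / S * ∑ i ∈ s, N i - #s) := by
        rw [sum_add_distrib, sum_sub_distrib, ← mul_sum]; simp
    _ ≤ #s * log (S / #s) := by
        have : #s / S * ∑ i ∈ s, N i ≤ #s / S * S := by gcongr
        rw [div_mul_cancel₀ _ hSpos.ne'] at this
        linarith

section UnnormalizedKL

variable {ι : Type*} [Fintype ι]

noncomputable def unnormalizedKL (p q : ι → ℝ) : ℝ :=
  ∑ i, (p i * log (p i / q i) - p i + q i)

variable {p q r z : ι → ℝ}

lemma unnormalizedKL_nonneg (hp : ∀ i, 0 ≤ p i) (hq : ∀ i, 0 < q i) :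
    0 ≤ unnormalizedKL p q :=
  sum_nonneg fun i _ => mul_log_div_sub_add_nonneg (hp i) (hq i)

lemma sub_dotProduct_log_div (hr : ∀ i, 0 < r i) (hq : ∀ i, 0 < q i) :
    (p - r) ⬝ᵥ (fun i => log (r i / q i))
      = unnormalizedKL p q - unnormalizedKL p r - unnormalizedKL r q := by
  simp only [dotProduct, unnormalizedKL, ← sum_sub_distrib, Pi.sub_apply]
  exact sum_congr rfl fun i _ => sub_mul_log_div_eq (hr i) (hq i)

lemma hasDerivAt_unnormalizedKL_add_smul (hr : ∀ i, 0 < r i) (hq : ∀ i, 0 < q i) :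
    HasDerivAt (fun s : ℝ => unnormalizedKL (r + s • (p - r)) q)
      ((p - r) ⬝ᵥ fun i => log (r i / q i)) 0 := by
  unfold unnormalizedKL dotProduct
  refine HasDerivAt.fun_sum fun i _ => ?_
  have hline : HasDerivAt (fun s : ℝ => r i + s * (p i - r i)) (p i - r i) 0 := by
    simpa using ((hasDerivAt_id (0 : ℝ)).mul_const (p i - r i)).const_add (r i)
  have h := (hasDerivAt_mul_log_div_sub_add (hr i) (hq i)).comp_of_eq (x := 0) hline (by simp)
  simpa [mul_comm, Function.comp_def] using h

lemma IsMinOn.sub_dotProduct_add_log_div_nonneg {K : Set (ι → ℝ)} (hK : Convex ℝ K) {η : ℝ}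
    (hmin : IsMinOn (fun p => η * p ⬝ᵥ z + unnormalizedKL p q) K r)
    (hrK : r ∈ K) (hpK : p ∈ K) (hr : ∀ i, 0 < r i) (hq : ∀ i, 0 < q i) :
    0 ≤ η * ((p - r) ⬝ᵥ z) + (p - r) ⬝ᵥ fun i => log (r i / q i) := by
  refine HasDerivAt.nonneg_of_isMinOn_Icc (g := fun s : ℝ => η * (r + s • (p - r)) ⬝ᵥ z
    + unnormalizedKL (r + s • (p - r)) q) ?_ ?_
  · refine HasDerivAt.add ?_ (hasDerivAt_unnormalizedKL_add_smul hr hq)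
    simp only [add_dotProduct, smul_dotProduct, smul_eq_mul]
    simpa using (((hasDerivAt_id (0 : ℝ)).mul_const ((p - r) ⬝ᵥ z)).const_add (r ⬝ᵥ z)).const_mul η
  · intro s hs
    simpa using hmin (hK.add_smul_sub_mem hrK hpK hs)

lemma mul_sub_dotProduct_le {η F : ℝ} (hη : 0 ≤ η) (hz : ∀ i, |z i| ≤ F)
    (hr : ∀ i, 0 ≤ r i) (hq : ∀ i, 0 < q i) :
    η * ((q - r) ⬝ᵥ z) ≤ unnormalizedKL r q + (η * F) ^ 2 / 2 * ∑ i, (r i + q i) := by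
  simp only [dotProduct, unnormalizedKL, mul_sum, ← sum_add_distrib, Pi.sub_apply]
  refine sum_le_sum fun i _ => ?_
  calc η * ((q i - r i) * z i) ≤ η * F * |r i - q i| := by
        rw [mul_assoc, abs_sub_comm]
        refine mul_le_mul_of_nonneg_left ?_ hη
        calc (q i - r i) * z i ≤ |(q i - r i) * z i| := le_abs_self _
          _ = |q i - r i| * |z i| := abs_mul _ _
          _ ≤ F * |q i - r i| := by
            rw [mul_comm]; exact mul_le_mul_of_nonneg_right (hz i) (abs_nonneg _)
    _ ≤ _ := mul_abs_sub_le_mul_log_div_sub_add_add (hr i) (hq i)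
    _ = _ := by ring

lemma omd_step {K : Set (ι → ℝ)} (hK : Convex ℝ K) {η F : ℝ} (hη : 0 ≤ η)
    (hz : ∀ i, |z i| ≤ F) (hmin : IsMinOn (fun p => η * p ⬝ᵥ z + unnormalizedKL p q) K r)
    (hrK : r ∈ K) (hpK : p ∈ K) (hr : ∀ i, 0 < r i) (hq : ∀ i, 0 < q i) :
    η * ((q - p) ⬝ᵥ z) ≤ unnormalizedKL p q - unnormalizedKL p r
      + (η * F) ^ 2 / 2 * ∑ i, (r i + q i) := by
  have hopt := hmin.sub_dotProduct_add_log_div_nonneg hK hrK hpK hr hq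
  rw [sub_dotProduct_log_div hr hq] at hopt
  have hstab := mul_sub_dotProduct_le hη hz (fun i => (hr i).le) hq
  have hsplit : (q - p) ⬝ᵥ z = (q - r) ⬝ᵥ z - (p - r) ⬝ᵥ z := by
    rw [← sub_dotProduct]; congr 1; abel
  rw [hsplit]
  linarith

theorem omd_regret_le {K : ℕ → Set (ι → ℝ)} {z q : ℕ → ι → ℝ} {u : ι → ℝ} {η F m : ℝ} {T : ℕ}
    (hη : 0 ≤ η) (hK : ∀ t < T, Convex ℝ (K t)) (hz : ∀ t < T, ∀ i, |z t i| ≤ F)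
    (hq : ∀ t ≤ T, ∀ i, 0 < q t i) (hmass : ∀ t ≤ T, ∑ i, q t i = m)
    (hqK : ∀ t < T, q (t + 1) ∈ K t)
    (hmin : ∀ t < T, IsMinOn (fun p => η * p ⬝ᵥ z t + unnormalizedKL p (q t)) (K t) (q (t + 1)))
    (huK : ∀ t < T, u ∈ K t) (hu : ∀ i, 0 ≤ u i) :
    η * ∑ t ∈ range T, (q t - u) ⬝ᵥ z t ≤ unnormalizedKL u (q 0) + T * (η ^ 2 * F ^ 2 * m) := by
  have hstep : ∀ t < T, η * ((q t - u) ⬝ᵥ z t)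
      ≤ unnormalizedKL u (q t) - unnormalizedKL u (q (t + 1)) + η ^ 2 * F ^ 2 * m := by
    intro t ht
    have h := omd_step (hK t ht) hη (hz t ht) (hmin t ht) (hqK t ht) (huK t ht)
      (hq (t + 1) ht) (hq t ht.le)
    rwa [sum_add_distrib, hmass (t + 1) ht, hmass t ht.le, show (η * F) ^ 2 / 2 * (m + m)
      = η ^ 2 * F ^ 2 * m by ring] at h
  calc η * ∑ t ∈ range T, (q t - u) ⬝ᵥ z t
      ≤ ∑ t ∈ range T,
          (unnormalizedKL u (q t) - unnormalizedKL u (q (t + 1)) + η ^ 2 * F ^ 2 * m) := by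
        rw [mul_sum]; exact sum_le_sum fun t ht => hstep t (mem_range.1 ht)
    _ = unnormalizedKL u (q 0) - unnormalizedKL u (q T) + T * (η ^ 2 * F ^ 2 * m) := by
        rw [sum_add_distrib, sum_range_sub' (fun t => unnormalizedKL u (q t)), sum_const,
          card_range, nsmul_eq_mul]
    _ ≤ unnormalizedKL u (q 0) + T * (η ^ 2 * F ^ 2 * m) := by
        linarith [unnormalizedKL_nonneg hu (hq T le_rfl)]

lemma unnormalizedKL_const_inv_card_le (hp : ∀ i, 0 ≤ p i) (hp1 : ∀ i, p i ≤ 1)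
    (hsum : ∑ i, p i = 1) :
    unnormalizedKL p (fun _ => ((Fintype.card ι : ℝ))⁻¹) ≤ log (Fintype.card ι) := by
  have hN : (0 : ℝ) < Fintype.card ι := by
    have : Nonempty ι := by
      by_contra h
      simp [not_nonempty_iff.1 h] at hsum
    exact_mod_cast Fintype.card_pos
  have hterm : ∀ i, p i * log (p i / (Fintype.card ι : ℝ)⁻¹) ≤ p i * log (Fintype.card ι) := by
    intro i
    rcases (hp i).eq_or_lt with h0 | hpos
    · simp [← h0]
    rw [div_inv_eq_mul, log_mul hpos.ne' hN.ne']
    nlinarith [mul_nonpos_of_nonneg_of_nonpos (hp i) (log_nonpos (hp i) (hp1 i))]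
  calc unnormalizedKL p (fun _ => ((Fintype.card ι : ℝ))⁻¹)
      ≤ ∑ i, (p i * log (Fintype.card ι) - p i + (Fintype.card ι : ℝ)⁻¹) :=
        sum_le_sum fun i _ => by linarith [hterm i]
    _ = log (Fintype.card ι) := by
        rw [sum_add_distrib, sum_sub_distrib, ← sum_mul, hsum, sum_const, card_univ,
          nsmul_eq_mul, mul_inv_cancel₀ hN.ne']
        ring

end UnnormalizedKL

namespace LoopFreeMDP

variable (M : LoopFreeMDP)

/-- The index set `J = ⋃_{k<L} X_k × A × X_{k+1}` of the paper. -/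
abbrev Triple : Type := Σ k : Fin M.L, M.X k × M.A × M.X (k + 1)

def flatten (q : ∀ k, M.X k → M.A → M.X (k + 1) → ℝ) (j : M.Triple) : ℝ :=
  q j.1 j.2.1 j.2.2.1 j.2.2.2

def IsUniform (q₀ : ∀ k, M.X k → M.A → M.X (k + 1) → ℝ) : Prop :=
  ∀ k < M.L, ∀ (x : M.X k) (a : M.A) (x' : M.X (k + 1)),
    q₀ k x a x' = 1 / ((Fintype.card (M.X k) : ℝ) * (Fintype.card M.A : ℝ) *
      (Fintype.card (M.X (k + 1)) : ℝ))

variable {M : LoopFreeMDP}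

lemma sum_flatten (q : ∀ k, M.X k → M.A → M.X (k + 1) → ℝ) :
    ∑ j, M.flatten q j = ∑ k ∈ range M.L, ∑ x, ∑ a, ∑ x', q k x a x' := by
  rw [Fintype.sum_sigma, ← Fin.sum_univ_eq_sum_range (fun k => ∑ x, ∑ a, ∑ x', q k x a x')]
  simp only [Fintype.sum_prod_type, flatten]

lemma ip_eq_dotProduct (q w : ∀ k, M.X k → M.A → M.X (k + 1) → ℝ) :
    M.ip q w = M.flatten q ⬝ᵥ M.flatten w :=
  (sum_flatten fun k x a x' => q k x a x' * w k x a x').symm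

lemma kl_eq_unnormalizedKL (q q' : ∀ k, M.X k → M.A → M.X (k + 1) → ℝ) :
    M.kl q q' = unnormalizedKL (M.flatten q) (M.flatten q') :=
  (sum_flatten fun k x a x' =>
    q k x a x' * log (q k x a x' / q' k x a x') - q k x a x' + q' k x a x').symm

lemma isLinearMap_flatten : IsLinearMap ℝ M.flatten :=
  ⟨fun _ _ => rfl, fun _ _ => rfl⟩

lemma card_X_pos {k : ℕ} (hk : k ≤ M.L) : 0 < Fintype.card (M.X k) :=
  have := M.nonemptyX k hk
  Fintype.card_pos

lemma cardX_pos : 0 < M.cardX :=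
  sum_pos (fun _ hk => M.card_X_pos (Nat.lt_succ_iff.1 (mem_range.1 hk))) nonempty_range_add_one

lemma sum_card_X_le_cardX : ∑ k ∈ range M.L, (Fintype.card (M.X k) : ℝ) ≤ M.cardX := by
  rw [cardX, Nat.cast_sum, sum_range_succ]
  linarith [(Nat.cast_nonneg (Fintype.card (M.X M.L)) : (0 : ℝ) ≤ _)]

lemma sum_card_X_succ_le_cardX :
    ∑ k ∈ range M.L, (Fintype.card (M.X (k + 1)) : ℝ) ≤ M.cardX := by
  rw [cardX, Nat.cast_sum, sum_range_succ']
  linarith [(Nat.cast_nonneg (Fintype.card (M.X 0)) : (0 : ℝ) ≤ _)]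

lemma sum_log_card_le :
    ∑ k ∈ range M.L,
        log ((Fintype.card (M.X k) : ℝ) * Fintype.card M.A * Fintype.card (M.X (k + 1)))
      ≤ M.L * log ((M.cardX : ℝ) ^ 2 * Fintype.card M.A / (M.L : ℝ) ^ 2) := by
  have hN : ∀ k ∈ range M.L, (0 : ℝ) < Fintype.card (M.X k) := fun k hk => by
    exact_mod_cast M.card_X_pos (mem_range.1 hk).le
  have hN' : ∀ k ∈ range M.L, (0 : ℝ) < Fintype.card (M.X (k + 1)) := fun k hk => by
    exact_mod_cast M.card_X_pos (mem_range.1 hk)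
  have hA : (0 : ℝ) < Fintype.card M.A := by exact_mod_cast Fintype.card_pos
  have hL : (0 : ℝ) < M.L := by exact_mod_cast M.hL
  have hX : (0 : ℝ) < M.cardX := by exact_mod_cast M.cardX_pos
  have h1 := sum_log_le_card_mul_log_div hN M.sum_card_X_le_cardX
  have h2 := sum_log_le_card_mul_log_div hN' M.sum_card_X_succ_le_cardX
  rw [card_range] at h1 h2
  calc _ = ∑ k ∈ range M.L, (log (Fintype.card (M.X k) : ℝ) + log (Fintype.card M.A)
          + log (Fintype.card (M.X (k + 1)) : ℝ)) := by
        refine sum_congr rfl fun k hk => ?_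
        rw [log_mul (by have := hN k hk; positivity) (hN' k hk).ne', log_mul (hN k hk).ne' hA.ne']
    _ = ∑ k ∈ range M.L, log (Fintype.card (M.X k) : ℝ) + M.L * log (Fintype.card M.A)
        + ∑ k ∈ range M.L, log (Fintype.card (M.X (k + 1)) : ℝ) := by
        simp only [sum_add_distrib, sum_const, card_range, nsmul_eq_mul]
    _ ≤ M.L * log (M.cardX / M.L) + M.L * log (Fintype.card M.A) + M.L * log (M.cardX / M.L) := by
        gcongr
    _ = M.L * log ((M.cardX : ℝ) ^ 2 * Fintype.card M.A / (M.L : ℝ) ^ 2) := by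
        rw [show (M.cardX : ℝ) ^ 2 * Fintype.card M.A / (M.L : ℝ) ^ 2
            = (M.cardX / M.L) * Fintype.card M.A * (M.cardX / M.L) by field_simp,
          log_mul (by positivity) (by positivity), log_mul (by positivity) (by positivity)]
        ring

lemma kl_le_sum_log_card {u q₀ : ∀ k, M.X k → M.A → M.X (k + 1) → ℝ}
    (hq₀ : M.IsUniform q₀)
    (hu : ∀ k < M.L, ∀ (x : M.X k) (a : M.A) (x' : M.X (k + 1)), 0 ≤ u k x a x' ∧ u k x a x' ≤ 1)
    (hu₁ : ∀ k < M.L, ∑ x : M.X k, ∑ a : M.A, ∑ x' : M.X (k + 1), u k x a x' = 1) :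
    M.kl u q₀ ≤ ∑ k ∈ range M.L,
      log ((Fintype.card (M.X k) : ℝ) * Fintype.card M.A * Fintype.card (M.X (k + 1))) := by
  refine sum_le_sum fun k hk => ?_
  have hk := mem_range.1 hk
  have h := unnormalizedKL_const_inv_card_le (ι := M.X k × M.A × M.X (k + 1))
    (p := fun j => u k j.1 j.2.1 j.2.2) (fun j => (hu k hk _ _ _).1) (fun j => (hu k hk _ _ _).2)
    (by simpa only [Fintype.sum_prod_type] using hu₁ k hk)
  simp only [unnormalizedKL, Fintype.sum_prod_type, Fintype.card_prod, Nat.cast_mul,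
    ← mul_assoc] at h
  simpa only [hq₀ k hk, one_div] using h

lemma IsUniform.pos {q₀ : ∀ k, M.X k → M.A → M.X (k + 1) → ℝ}
    (hq₀ : M.IsUniform q₀)
    {k : ℕ} (hk : k < M.L) (x : M.X k) (a : M.A) (x' : M.X (k + 1)) : 0 < q₀ k x a x' := by
  have := M.card_X_pos hk.le
  have := M.card_X_pos hk
  rw [hq₀ k hk]
  positivity

lemma IsUniform.sum_eq_one {q₀ : ∀ k, M.X k → M.A → M.X (k + 1) → ℝ}
    (hq₀ : M.IsUniform q₀)
    {k : ℕ} (hk : k < M.L) : ∑ x : M.X k, ∑ a : M.A, ∑ x' : M.X (k + 1), q₀ k x a x' = 1 := by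
  have := M.card_X_pos hk.le
  have := M.card_X_pos hk
  simp only [hq₀ k hk, sum_const, card_univ, nsmul_eq_mul]
  field_simp

theorem omd_regret_le {T : ℕ} {η F : ℝ} (hη : 0 ≤ η)
    {z q : ℕ → ∀ k, M.X k → M.A → M.X (k + 1) → ℝ}
    {K : ℕ → Set (∀ k, M.X k → M.A → M.X (k + 1) → ℝ)} {u : ∀ k, M.X k → M.A → M.X (k + 1) → ℝ}
    (hz : ∀ t < T, ∀ k < M.L, ∀ (x : M.X k) (a : M.A) (x' : M.X (k + 1)), |z t k x a x'| ≤ F)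
    (hK : ∀ t < T, Convex ℝ (K t))
    (hq₀ : M.IsUniform (q 0))
    (hpos : ∀ t < T, ∀ k < M.L, ∀ (x : M.X k) (a : M.A) (x' : M.X (k + 1)),
      0 < q (t + 1) k x a x')
    (hmass : ∀ t < T, ∀ k < M.L,
      ∑ x : M.X k, ∑ a : M.A, ∑ x' : M.X (k + 1), q (t + 1) k x a x' = 1)
    (hqK : ∀ t < T, q (t + 1) ∈ K t)
    (hmin : ∀ t < T, ∀ p ∈ K t,
      η * M.ip (q (t + 1)) (z t) + M.kl (q (t + 1)) (q t) ≤ η * M.ip p (z t) + M.kl p (q t))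
    (huK : ∀ t < T, u ∈ K t)
    (hu : ∀ k < M.L, ∀ (x : M.X k) (a : M.A) (x' : M.X (k + 1)), 0 ≤ u k x a x') :
    η * ∑ t ∈ range T, M.ip (fun k x a x' => q t k x a x' - u k x a x') (z t)
      ≤ M.kl u (q 0) + T * (η ^ 2 * F ^ 2 * M.L) := by
  have hq : ∀ t ≤ T, ∀ j, 0 < M.flatten (q t) j
    | 0, _ => fun j => hq₀.pos j.1.isLt _ _ _
    | t + 1, ht => fun j => hpos t ht j.1 j.1.isLt _ _ _
  have hlayer : ∀ t ≤ T, ∀ k < M.L,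
      ∑ x : M.X k, ∑ a : M.A, ∑ x' : M.X (k + 1), q t k x a x' = 1
    | 0, _ => fun _ hk => hq₀.sum_eq_one hk
    | t + 1, ht => hmass t ht
  have h := _root_.omd_regret_le (K := fun t => M.flatten '' K t)
    (z := fun t => M.flatten (z t)) (q := fun t => M.flatten (q t)) (u := M.flatten u) (m := M.L) hη
    (fun t ht => (hK t ht).is_linear_image isLinearMap_flatten)
    (fun t ht j => hz t ht j.1 j.1.isLt _ _ _) hq
    (fun t ht => by
      rw [sum_flatten, sum_congr rfl fun k hk => hlayer t ht k (mem_range.1 hk)]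
      simp)
    (fun t ht => ⟨_, hqK t ht, rfl⟩)
    (fun t ht => isMinOn_iff.2 <| by
      rintro _ ⟨p, hp, rfl⟩
      simpa only [ip_eq_dotProduct, kl_eq_unnormalizedKL] using hmin t ht p hp)
    (fun t ht => ⟨u, huK t ht, rfl⟩) (fun j => hu j.1 j.1.isLt _ _ _)
  simp only [ip_eq_dotProduct, kl_eq_unnormalizedKL]
  exact h

end LoopFreeMDP

lemma log_sq_mul_div_sq_le_two_mul_log {x a l : ℝ} (hx : 0 < x) (hl : 0 < l) (ha : 1 ≤ a) :
    log (x ^ 2 * a / l ^ 2) ≤ 2 * log (x * a / l) := by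
  calc log (x ^ 2 * a / l ^ 2) ≤ log ((x * a / l) ^ 2) := by
        refine log_le_log (by positivity) ?_
        rw [div_pow, mul_pow]
        gcongr
        nlinarith
    _ = 2 * log (x * a / l) := by rw [log_pow]; norm_num

lemma le_two_mul_sqrt_of_mul_le {η x a b c : ℝ} (ha : 0 < a) (hb : 0 < b) (hη : η = √(a / b))
    (h : η * x ≤ c * a + η ^ 2 * (c * b)) : x ≤ 2 * c * √(a * b) := by
  have hη₀ : 0 < η := hη ▸ sqrt_pos.2 (div_pos ha hb)
  have h₁ : η * √(a * b) = a := by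
    rw [hη, ← sqrt_mul (div_pos ha hb).le, show a / b * (a * b) = a ^ 2 by field_simp,
      sqrt_sq ha.le]
  have h₂ : η * b = √(a * b) := by
    calc η * b = √(a / b) * √(b ^ 2) := by rw [hη, sqrt_sq hb.le]
      _ = √(a * b) := by
        rw [← sqrt_mul (div_pos ha hb).le]
        congr 1
        field_simp
  refine le_of_mul_le_mul_left ?_ hη₀
  linear_combination h + (-c) * h₁ + (c * η) * h₂

/-- Here `q t` is the paper's `q_{t+1}`, so `q 0` is the uniform starting point. -/
theorem omd_regret_tuned_eta (M : LoopFreeMDP) (T : ℕ) (hT : 1 ≤ T)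
    (F : ℝ) (hF : 0 < F)
    (hL2 : M.L ^ 2 < M.cardX ^ 2 * Fintype.card M.A)
    (η : ℝ)
    (hη : η = Real.sqrt
      (Real.log ((M.cardX : ℝ) ^ 2 * (Fintype.card M.A : ℝ) / (M.L : ℝ) ^ 2) / (F ^ 2 * T)))
    (z : ℕ → ∀ k, M.X k → M.A → M.X (k + 1) → ℝ)
    (K : ℕ → Set (∀ k, M.X k → M.A → M.X (k + 1) → ℝ))
    (q : ℕ → ∀ k, M.X k → M.A → M.X (k + 1) → ℝ)
    (hq1 : ∀ k < M.L, ∀ (x : M.X k) (a : M.A) (x' : M.X (k + 1)),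
      q 0 k x a x' = 1 / ((Fintype.card (M.X k) : ℝ) * (Fintype.card M.A : ℝ) *
        (Fintype.card (M.X (k + 1)) : ℝ)))
    (hz : ∀ t < T, ∀ k < M.L, ∀ (x : M.X k) (a : M.A) (x' : M.X (k + 1)),
      |z t k x a x'| ≤ F)
    (hKsub : ∀ t < T, ∀ p ∈ K t,
      (∀ k < M.L, ∀ (x : M.X k) (a : M.A) (x' : M.X (k + 1)),
        0 ≤ p k x a x' ∧ p k x a x' ≤ 1) ∧
      (∀ k < M.L, ∑ x : M.X k, ∑ a : M.A, ∑ x' : M.X (k + 1), p k x a x' = 1))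
    (hKconv : ∀ t < T, Convex ℝ (K t))
    (hmem : ∀ t < T, q (t + 1) ∈ K t)
    (hpos : ∀ t < T, ∀ k < M.L, ∀ (x : M.X k) (a : M.A) (x' : M.X (k + 1)),
      0 < q (t + 1) k x a x')
    (hmin : ∀ t < T, ∀ p ∈ K t,
      η * M.ip (q (t + 1)) (z t) + M.kl (q (t + 1)) (q t)
        ≤ η * M.ip p (z t) + M.kl p (q t)) :
    ∀ qq, (∀ t < T, qq ∈ K t) →
      ∑ t ∈ Finset.range T,
          M.ip (fun k x a x' => q t k x a x' - qq k x a x') (z t)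
        ≤ 2 * F * M.L *
            Real.sqrt (2 * T *
              Real.log ((M.cardX : ℝ) * (Fintype.card M.A : ℝ) / (M.L : ℝ)))  := by
  intro u hu
  obtain ⟨hu₀₁, hu₁⟩ := hKsub 0 hT u (hu 0 hT)
  have hA : (1 : ℝ) ≤ Fintype.card M.A := by exact_mod_cast Fintype.card_pos
  have hL : (0 : ℝ) < M.L := by exact_mod_cast M.hL
  have hX : (0 : ℝ) < M.cardX := by exact_mod_cast M.cardX_pos
  have hR : 0 < log ((M.cardX : ℝ) ^ 2 * Fintype.card M.A / (M.L : ℝ) ^ 2) :=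
    log_pos ((one_lt_div (by positivity)).2 (by exact_mod_cast hL2))
  have hη₀ : 0 < η := hη ▸ sqrt_pos.2 (by positivity)
  have hregret := M.omd_regret_le hη₀.le hz hKconv hq1 hpos
    (fun t ht => (hKsub t ht _ (hmem t ht)).2) hmem hmin hu fun k hk x a x' => (hu₀₁ k hk x a x').1
  have hinit := (M.kl_le_sum_log_card hq1 hu₀₁ hu₁).trans M.sum_log_card_le
  have hlog := log_sq_mul_div_sq_le_two_mul_log hX hL hA
  set R := log ((M.cardX : ℝ) ^ 2 * Fintype.card M.A / (M.L : ℝ) ^ 2)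
  calc _ ≤ 2 * M.L * √(R * (F ^ 2 * T)) :=
        le_two_mul_sqrt_of_mul_le hR (by positivity) hη <| by
          linarith [show (T : ℝ) * (η ^ 2 * F ^ 2 * M.L) = η ^ 2 * (M.L * (F ^ 2 * T)) by ring]
    _ = 2 * F * M.L * √(T * R) := by
        rw [show R * (F ^ 2 * T) = F ^ 2 * (T * R) by ring, sqrt_mul (sq_nonneg F), sqrt_sq hF.le]
        ring
    _ ≤ _ := by
        gcongr ?_ * √?_
        nlinarith [(Nat.cast_nonneg T : (0 : ℝ) ≤ T)]
end

section
/- (Lemma B.2) Let P and P' be two transition functions and π a policy on an episodic loop-free MDP, and for x ∈ X_s (s ≤ L−1) and a ∈ A write ξ(x,a) = Σ_{x'∈X_{s+1}} | P(x'|x,a) − P'(x'|x,a) |. Then for every 1 ≤ k ≤ L−1: Σ_{x∈X_k} Σ_{a∈A} | q^{P,π}(x,a) − q^{P',π}(x,a) | ≤ Σ_{s=0}^{k−1} Σ_{x∈X_s} Σ_{a∈A} q^{P',π}(x,a)·ξ(x,a). -/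
open Finset

theorem sum_abs_sum_mul_sub_sum_mul_le {ι κ : Type*} [Fintype ι] [Fintype κ]
    (u v : ι → ℝ) (K K' : ι → κ → ℝ) (hv : ∀ i, 0 ≤ v i) (hK : ∀ i c, 0 ≤ K i c)
    (hK_sum : ∀ i, ∑ c, K i c = 1) :
    ∑ c, |∑ i, u i * K i c - ∑ i, v i * K' i c| ≤
      ∑ i, |u i - v i| + ∑ i, v i * ∑ c, |K i c - K' i c| := by
  have termwise : ∀ i c, |u i * K i c - v i * K' i c| ≤
      |u i - v i| * K i c + v i * |K i c - K' i c| := fun i c => by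
    calc |u i * K i c - v i * K' i c|
        = |(u i - v i) * K i c + v i * (K i c - K' i c)| := by ring_nf
      _ ≤ |u i - v i| * K i c + v i * |K i c - K' i c| := by
        grw [abs_add_le, abs_mul, abs_mul, abs_of_nonneg (hK i c), abs_of_nonneg (hv i)]
  calc ∑ c, |∑ i, u i * K i c - ∑ i, v i * K' i c|
      ≤ ∑ c, ∑ i, (|u i - v i| * K i c + v i * |K i c - K' i c|) := by
        gcongr with c
        rw [← sum_sub_distrib]
        exact (abs_sum_le_sum_abs _ _).trans (sum_le_sum fun i _ => termwise i c)
    _ = ∑ i, |u i - v i| + ∑ i, v i * ∑ c, |K i c - K' i c| := by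
        simp only [sum_comm (γ := κ), sum_add_distrib, ← mul_sum, hK_sum, mul_one]

namespace LoopFreeMDP

variable (M : LoopFreeMDP) (P P' : M.TransKer) (π : M.PolicyKer)

def marginal (k : ℕ) (x : M.X k) (a : M.A) : ℝ := M.mu P π k x * π k x a

lemma mu_succ (k : ℕ) (x' : M.X (k + 1)) :
    M.mu P π (k + 1) x' = ∑ x, ∑ a, M.marginal P π k x a * P k x a x' :=
  rfl

variable {M P P' π}

lemma sum_occ_eq_marginal (hP : M.IsTransition P) {k : ℕ} (hk : k < M.L) (x : M.X k) (a : M.A) :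
    ∑ x', M.occ P π k x a x' = M.marginal P π k x a := by
  simp only [occ, ← mul_sum, (hP k hk x a).2, mul_one, marginal]

lemma mu_nonneg (hP : M.IsTransition P) (hπ : M.IsPolicy π) :
    ∀ k, k ≤ M.L → ∀ x : M.X k, 0 ≤ M.mu P π k x
  | 0, _, _ => zero_le_one
  | k + 1, hk, x' => by
    rw [mu_succ]
    refine sum_nonneg fun x _ => sum_nonneg fun a _ => mul_nonneg (mul_nonneg ?_ ((hπ k hk x).1 a))
      ((hP k hk x a).1 x')
    exact mu_nonneg hP hπ k (by omega) x

lemma sum_abs_marginal_sub (hπ : M.IsPolicy π) {k : ℕ} (hk : k < M.L) :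
    ∑ x, ∑ a, |M.marginal P π k x a - M.marginal P' π k x a| =
      ∑ x, |M.mu P π k x - M.mu P' π k x| := by
  refine sum_congr rfl fun x _ => ?_
  simp only [marginal, ← sub_mul, abs_mul, abs_of_nonneg ((hπ k hk x).1 _), ← mul_sum,
    (hπ k hk x).2, mul_one]

theorem sum_abs_mu_sub_le (hP : M.IsTransition P) (hP' : M.IsTransition P') (hπ : M.IsPolicy π) :
    ∀ k, k ≤ M.L →
      ∑ x, |M.mu P π k x - M.mu P' π k x| ≤
        ∑ s ∈ range k, ∑ x : M.X s, ∑ a,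
          M.marginal P' π s x a * ∑ x', |P s x a x' - P' s x a x'|
  | 0, _ => by simp [mu]
  | k + 1, hk => by
    have hkL : k < M.L := by omega
    have step := sum_abs_sum_mul_sub_sum_mul_le
      (fun p : M.X k × M.A => M.marginal P π k p.1 p.2)
      (fun p => M.marginal P' π k p.1 p.2) (fun p => P k p.1 p.2) (fun p => P' k p.1 p.2)
      (fun p => mul_nonneg (mu_nonneg hP' hπ k hkL.le p.1) ((hπ k hkL p.1).1 p.2))
      (fun p => (hP k hkL p.1 p.2).1) (fun p => (hP k hkL p.1 p.2).2)
    simp only [← mu_succ, Fintype.sum_prod_type, sum_abs_marginal_sub hπ hkL] at step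
    rw [sum_range_succ]
    exact step.trans (add_le_add_left (sum_abs_mu_sub_le hP hP' hπ k hkL.le) _)

end LoopFreeMDP

/-- **Lemma B.2.** For two transition functions `P, P'` and a policy `π`, with
`ξ(x,a) = ‖P(·|x,a) − P'(·|x,a)‖₁`, the L1 distance between the state-action marginals of the
two occupancy measures at layer `k` (for `1 ≤ k ≤ L−1`) is bounded by the accumulated weighted
transition errors in the previous layers. -/
theorem occupancy_marginal_L1_bound (M : LoopFreeMDP)
    (P P' : M.TransKer) (π : M.PolicyKer)
    (hP : M.IsTransition P) (hP' : M.IsTransition P') (hπ : M.IsPolicy π) :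
    ∀ k, 1 ≤ k → k < M.L →
      ∑ x : M.X k, ∑ a : M.A,
          |(∑ x' : M.X (k + 1), M.occ P π k x a x')
            - (∑ x' : M.X (k + 1), M.occ P' π k x a x')|
        ≤ ∑ s ∈ Finset.range k, ∑ x : M.X s, ∑ a : M.A,
            (∑ x' : M.X (s + 1), M.occ P' π s x a x') *
              (∑ x' : M.X (s + 1), |P s x a x' - P' s x a x'|) := by
  intro k _ hk
  refine le_of_eq_of_le ?_ ((LoopFreeMDP.sum_abs_mu_sub_le hP hP' hπ k hk.le).trans_eq ?_)
  · simp only [LoopFreeMDP.sum_occ_eq_marginal hP hk, LoopFreeMDP.sum_occ_eq_marginal hP' hk,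
      LoopFreeMDP.sum_abs_marginal_sub hπ hk]
  · refine sum_congr rfl fun s hs => ?_
    simp only [LoopFreeMDP.sum_occ_eq_marginal hP' ((mem_range.mp hs).trans hk)]
end

section
/- (Epoch-doubling counting lemma, used in the proof of Lemma B.3) Let m ≥ 1 and let n_1, …, n_m be nonnegative integers. For 1 ≤ i ≤ m set N_i = Σ_{j=1}^{i−1} n_j (so N_1 = 0), and suppose n_i ≤ max{1, N_i} for every i. Then Σ_{i=1}^m n_i / √(max{1, N_i}) ≤ 3·√( Σ_{j=1}^m n_j ). -/
open Finset

private lemma epoch_key (S a : ℝ) (hS : 1 ≤ S) (ha0 : 0 ≤ a) (ha : a ≤ S) :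
    a / Real.sqrt S ≤ (1 + Real.sqrt 2) * (Real.sqrt (S + a) - Real.sqrt S) := by
  have hS0 : (0:ℝ) ≤ S := by linarith
  set x := Real.sqrt S with hxdef
  set y := Real.sqrt (S + a) with hydef
  set s := Real.sqrt 2 with hsdef
  have hx1 : 1 ≤ x := Real.one_le_sqrt.mpr hS
  have hx0 : 0 < x := by linarith
  have hx2 : x ^ 2 = S := Real.sq_sqrt hS0
  have hy2 : y ^ 2 = S + a := Real.sq_sqrt (by linarith)
  have hs2 : s ^ 2 = 2 := Real.sq_sqrt (by norm_num)
  have hs1 : 1 ≤ s := Real.one_le_sqrt.mpr (by norm_num)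
  have hyx : x ≤ y := Real.sqrt_le_sqrt (by linarith)
  have hysx : y ≤ s * x := by
    rw [hydef, hsdef, hxdef, ← Real.sqrt_mul (by norm_num : (0:ℝ) ≤ 2)]
    exact Real.sqrt_le_sqrt (by linarith)
  rw [div_le_iff₀ hx0]
  nlinarith [mul_nonneg (sub_nonneg.mpr hyx) (sub_nonneg.mpr hysx),
    mul_nonneg (sub_nonneg.mpr hyx) hx0.le]

private lemma epoch_aux (n : ℕ → ℕ) :
    ∀ m : ℕ, (∀ i < m, n i ≤ max 1 (∑ j ∈ Finset.range i, n j)) →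
    ∑ i ∈ Finset.range m,
        (n i : ℝ) / Real.sqrt ((max 1 (∑ j ∈ Finset.range i, n j) : ℕ) : ℝ)
      ≤ (1 + Real.sqrt 2) * Real.sqrt ((∑ j ∈ Finset.range m, n j : ℕ) : ℝ)
          - Real.sqrt 2 * ((min 1 (∑ j ∈ Finset.range m, n j) : ℕ) : ℝ) := by
  intro m
  induction m with
  | zero => intro _; simp
  | succ m ih =>
    intro hd
    have hdm : ∀ i < m, n i ≤ max 1 (∑ j ∈ Finset.range i, n j) :=
      fun i hi => hd i (Nat.lt_succ_of_lt hi)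
    have IH := ih hdm
    set S : ℕ := ∑ j ∈ Finset.range m, n j with hSdef
    have hsum : ∑ j ∈ Finset.range (m+1), n j = S + n m := Finset.sum_range_succ n m
    rw [Finset.sum_range_succ, hsum]
    rcases Nat.eq_zero_or_pos S with hS0 | hSpos
    · -- S = 0 : all earlier terms vanish
      have hall : ∀ i ∈ Finset.range m, (n i : ℝ) /
          Real.sqrt ((max 1 (∑ j ∈ Finset.range i, n j) : ℕ) : ℝ) = 0 := by
        intro i hi
        have : n i = 0 := Finset.sum_eq_zero_iff.mp (hSdef.symm.trans hS0) i hi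
        simp [this]
      rw [Finset.sum_eq_zero hall, hS0, zero_add]
      have hnm : n m ≤ 1 := by
        have := hd m (Nat.lt_succ_self m)
        simpa [← hSdef, hS0] using this
      simp only [← hSdef, hS0]
      interval_cases h : n m
      · simp
      · norm_num
    · -- S ≥ 1
      have hS1 : (1:ℝ) ≤ (S:ℝ) := by exact_mod_cast hSpos
      have hmax : max 1 S = S := Nat.max_eq_right hSpos
      have hminS : min 1 S = 1 := Nat.min_eq_left hSpos
      have hminS' : min 1 (S + n m) = 1 := Nat.min_eq_left (by omega)
      have hnm : (n m : ℝ) ≤ (S:ℝ) := by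
        have := hd m (Nat.lt_succ_self m)
        rw [← hSdef, hmax] at this
        exact_mod_cast this
      have key := epoch_key (S:ℝ) (n m : ℝ) hS1 (Nat.cast_nonneg _) hnm
      rw [← hSdef, hmax] at *
      have hcast : ((S + n m : ℕ) : ℝ) = (S:ℝ) + (n m : ℝ) := by push_cast; ring
      rw [hminS'] at *
      rw [hminS] at IH
      rw [hcast]
      calc (∑ i ∈ Finset.range m, (n i : ℝ) /
            Real.sqrt ((max 1 (∑ j ∈ Finset.range i, n j) : ℕ) : ℝ))
            + (n m : ℝ) / Real.sqrt ((S:ℕ) : ℝ)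
          ≤ ((1 + Real.sqrt 2) * Real.sqrt ((S:ℕ):ℝ) - Real.sqrt 2 * ((1:ℕ):ℝ))
            + (1 + Real.sqrt 2) * (Real.sqrt ((S:ℝ) + (n m : ℝ)) - Real.sqrt (S:ℝ)) := by
            exact add_le_add IH key
        _ = (1 + Real.sqrt 2) * Real.sqrt ((S:ℝ) + (n m : ℝ)) - Real.sqrt 2 * ((1:ℕ):ℝ) := by
            ring
      -- goal closed by calc

/-- **Epoch-doubling counting lemma** (used in the proof of Lemma B.3). If `n_1,…,n_m` are
nonnegative integers with partial sums `N_i = Σ_{j<i} n_j` and `n_i ≤ max{1, N_i}` for every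
`i`, then `Σ_{i=1}^m n_i/√(max{1,N_i}) ≤ 3·√(Σ_{j=1}^m n_j)`. (Epochs are indexed
`0,…,m−1` here.) -/
theorem epoch_doubling_counting (m : ℕ) (hm : 1 ≤ m) (n : ℕ → ℕ)
    (hdouble : ∀ i < m, n i ≤ max 1 (∑ j ∈ Finset.range i, n j)) :
    ∑ i ∈ Finset.range m,
        (n i : ℝ) / Real.sqrt ((max 1 (∑ j ∈ Finset.range i, n j) : ℕ) : ℝ)
      ≤ 3 * Real.sqrt ((∑ j ∈ Finset.range m, n j : ℕ) : ℝ) := by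
  have h := epoch_aux n m hdouble
  have h2 : (1:ℝ) ≤ Real.sqrt 2 := Real.one_le_sqrt.mpr (by norm_num)
  have h2' : Real.sqrt 2 ≤ 2 := by
    nlinarith [Real.sq_sqrt (show (0:ℝ) ≤ 2 by norm_num), Real.sqrt_nonneg 2]
  have hsq : 0 ≤ Real.sqrt ((∑ j ∈ Finset.range m, n j : ℕ) : ℝ) := Real.sqrt_nonneg _
  have hmin : (0:ℝ) ≤ ((min 1 (∑ j ∈ Finset.range m, n j) : ℕ) : ℝ) := Nat.cast_nonneg _
  nlinarith
end
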